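/- arXiv:1905.00360 — 10 statements merged into one kernel-verified Lean document; each statement's English description precedes it below -/
import Mathlib

section
/- Let f̂ : S×A → ℝ and let π̂ = π_{f̂} be the greedy policy with respect to f̂. Then v* - v^{π̂} ≤ Σ_{h=1}^∞ γ^{h-1} (‖Q* - f̂‖_{2, η_h^{π̂}×π*} + ‖Q* - f̂‖_{2, η_h^{π̂}×π̂}), where η_h^{π̂} is the state distribution at step h when following π̂ from the initial distribution η₁, and ν×π denotes the joint distribution over (s,a) with s ~ ν and a = π(s). -/
open Finset

/-- Suboptimality decomposition for the greedy policy: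
`v* - v^{π̂} ≤ Σ_{h≥1} γ^{h-1} (‖Q* - f̂‖_{2,η_h^{π̂}×π*} + ‖Q* - f̂‖_{2,η_h^{π̂}×π̂})`.
Here `V*(s) = Q*(s,π*(s))`, `v* = E_{η₁}[V*]`, `v^{π̂} = E_{η₁}[V^{π̂}]`,
`η_h^{π̂}` is the state distribution at step `h` under `π̂`, and
`‖g‖_{2,ν×π} = (Σ_s ν(s) g(s,π(s))²)^{1/2}`. (Indexing: `h : ℕ` starts at 0,
so `γ^h` corresponds to `γ^{h-1}` with `h` starting at 1.) -/
theorem stmt3 {S A : Type*} [Fintype S] [Fintype A] [Nonempty A]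
    (P : S → A → S → ℝ) (R : S → A → ℝ) (γ Rmax : ℝ) (η1 : S → ℝ)
    (hγ0 : 0 ≤ γ) (hγ1 : γ < 1)
    (hP0 : ∀ s a s', 0 ≤ P s a s') (hP1 : ∀ s a, ∑ s', P s a s' = 1)
    (hR : ∀ s a, 0 ≤ R s a ∧ R s a ≤ Rmax)
    (hη0 : ∀ s, 0 ≤ η1 s) (hη1 : ∑ s, η1 s = 1)
    (Qstar : S → A → ℝ) (πstar : S → A) (Vπ : S → ℝ)
    (f : S → A → ℝ) (πf : S → A)
    -- π̂ = π_{f̂} is greedy with respect to f̂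
    (hgreedy : ∀ s a, f s a ≤ f s (πf s))
    -- Q* satisfies the Bellman optimality equation with optimal policy π*
    (hQ : ∀ s a, Qstar s a = R s a + γ * ∑ s', P s a s' * Qstar s' (πstar s'))
    (hopt : ∀ s a, Qstar s a ≤ Qstar s (πstar s))
    -- V^{π̂} satisfies the Bellman equation of π̂
    (hVπ : ∀ s, Vπ s = R s (πf s) + γ * ∑ s', P s (πf s) s' * Vπ s')
    -- η h = η_{h+1}^{π̂}: state distribution after h steps of π̂ from η₁
    (η : ℕ → S → ℝ)
    (hη_zero : η 0 = η1)
    (hη_succ : ∀ h s', η (h + 1) s' = ∑ s, η h s * P s (πf s) s') :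
    (∑ s, η1 s * Qstar s (πstar s)) - (∑ s, η1 s * Vπ s)
      ≤ ∑' h : ℕ, γ ^ h *
          (Real.sqrt (∑ s, η h s * (Qstar s (πstar s) - f s (πstar s)) ^ 2)
            + Real.sqrt (∑ s, η h s * (Qstar s (πf s) - f s (πf s)) ^ 2)) := by
  classical
  set Vs : S → ℝ := fun s => Qstar s (πstar s) with hVs
  set E : ℕ → ℝ := fun h => ∑ s, η h s * (Vs s - Vπ s) with hE
  set D : ℕ → ℝ := fun h => ∑ s, η h s * (Vs s - Qstar s (πf s)) with hD
  set B : ℕ → ℝ := fun h =>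
    Real.sqrt (∑ s, η h s * (Qstar s (πstar s) - f s (πstar s)) ^ 2)
      + Real.sqrt (∑ s, η h s * (Qstar s (πf s) - f s (πf s)) ^ 2) with hB
  -- η h is a probability distribution
  have hprob : ∀ h, (∀ s, 0 ≤ η h s) ∧ (∑ s, η h s = 1) := by
    intro h
    induction h with
    | zero => exact ⟨by simpa [hη_zero] using hη0, by simpa [hη_zero] using hη1⟩
    | succ n ih =>
      constructor
      · intro s'
        rw [hη_succ]
        exact Finset.sum_nonneg fun s _ => mul_nonneg (ih.1 s) (hP0 s (πf s) s')
      · have h1 : ∑ s', η (n + 1) s' = ∑ s', ∑ s, η n s * P s (πf s) s' := by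
          simp [hη_succ]
        rw [h1, Finset.sum_comm]
        have h2 : ∀ s ∈ Finset.univ, ∑ s' : S, η n s * P s (πf s) s' = η n s := by
          intro s _
          rw [← Finset.mul_sum, hP1, mul_one]
        rw [Finset.sum_congr rfl h2, ih.2]
  have hle1 : ∀ h s, η h s ≤ 1 := by
    intro h s
    have h3 := Finset.single_le_sum (f := fun s => η h s)
      (fun i _ => (hprob h).1 i) (Finset.mem_univ s)
    simpa [(hprob h).2] using h3
  -- recursion E h = D h + γ * E (h+1)
  have hrec : ∀ h, E h = D h + γ * E (h + 1) := by
    intro h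
    have hgap : ∀ s, Qstar s (πf s) - Vπ s
        = γ * ∑ s', P s (πf s) s' * (Vs s' - Vπ s') := by
      intro s
      have h4 : γ * ∑ s', P s (πf s) s' * (Vs s' - Vπ s')
          = (γ * ∑ s', P s (πf s) s' * Qstar s' (πstar s'))
            - γ * ∑ s', P s (πf s) s' * Vπ s' := by
        rw [← mul_sub, ← Finset.sum_sub_distrib]
        congr 1
        refine Finset.sum_congr rfl fun s' _ => by simp only [hVs]; ring
      rw [hQ s (πf s), hVπ s, h4]
      ring
    have h1 : E h = D h + ∑ s, η h s * (Qstar s (πf s) - Vπ s) := by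
      rw [hE, hD]
      simp only
      rw [← Finset.sum_add_distrib]
      refine Finset.sum_congr rfl fun s _ => by ring
    rw [h1]
    congr 1
    have h5 : ∑ s, η h s * (Qstar s (πf s) - Vπ s)
        = γ * ∑ s, ∑ s', η h s * P s (πf s) s' * (Vs s' - Vπ s') := by
      rw [Finset.mul_sum]
      refine Finset.sum_congr rfl fun s _ => ?_
      rw [hgap s]
      simp only [Finset.mul_sum]
      refine Finset.sum_congr rfl fun s' _ => by ring
    rw [h5]
    congr 1
    rw [hE]
    simp only
    rw [Finset.sum_comm]
    refine Finset.sum_congr rfl fun s' _ => ?_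
    rw [hη_succ, Finset.sum_mul]
  -- telescoping
  have htel : ∀ H, E 0 = (∑ h ∈ Finset.range H, γ ^ h * D h) + γ ^ H * E H := by
    intro H
    induction H with
    | zero => simp
    | succ n ih =>
      rw [ih, Finset.sum_range_succ, hrec n]
      ring
  -- bound on E
  set C : ℝ := ∑ s, |Vs s - Vπ s| with hCdef
  have hC : ∀ h, |E h| ≤ C := by
    intro h
    calc |E h| ≤ ∑ s, |η h s * (Vs s - Vπ s)| := Finset.abs_sum_le_sum_abs _ _
      _ ≤ C := by
          apply Finset.sum_le_sum
          intro s _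
          rw [abs_mul, abs_of_nonneg ((hprob h).1 s)]
          exact mul_le_of_le_one_left (abs_nonneg _) (hle1 h s)
  have hC0 : 0 ≤ C := Finset.sum_nonneg fun s _ => abs_nonneg _
  -- Cauchy-Schwarz helper
  have hCS : ∀ (h : ℕ) (g : S → ℝ),
      ∑ s, η h s * |g s| ≤ Real.sqrt (∑ s, η h s * g s ^ 2) := by
    intro h g
    have key := Finset.sum_mul_sq_le_sq_mul_sq Finset.univ
      (fun s => Real.sqrt (η h s)) (fun s => Real.sqrt (η h s) * |g s|)
    have e1 : ∑ s, Real.sqrt (η h s) * (Real.sqrt (η h s) * |g s|)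
        = ∑ s, η h s * |g s| := by
      refine Finset.sum_congr rfl fun s _ => ?_
      rw [← mul_assoc, Real.mul_self_sqrt ((hprob h).1 s)]
    have e2 : ∑ s, Real.sqrt (η h s) ^ 2 = (1 : ℝ) := by
      rw [← (hprob h).2]
      refine Finset.sum_congr rfl fun s _ => Real.sq_sqrt ((hprob h).1 s)
    have e3 : ∑ s, (Real.sqrt (η h s) * |g s|) ^ 2 = ∑ s, η h s * g s ^ 2 := by
      refine Finset.sum_congr rfl fun s _ => ?_
      rw [mul_pow, Real.sq_sqrt ((hprob h).1 s), sq_abs]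
    rw [e1, e2, e3, one_mul] at key
    have hnn : 0 ≤ ∑ s, η h s * |g s| :=
      Finset.sum_nonneg fun s _ => mul_nonneg ((hprob h).1 s) (abs_nonneg _)
    have hynn : 0 ≤ ∑ s, η h s * g s ^ 2 :=
      Finset.sum_nonneg fun s _ => mul_nonneg ((hprob h).1 s) (sq_nonneg _)
    exact (Real.le_sqrt hnn hynn).mpr key
  -- D h ≤ B h
  have hDB : ∀ h, D h ≤ B h := by
    intro h
    have hpt : ∀ s, Vs s - Qstar s (πf s)
        ≤ |Qstar s (πstar s) - f s (πstar s)| + |Qstar s (πf s) - f s (πf s)| := by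
      intro s
      have := hgreedy s (πstar s)
      have h6 : Vs s - Qstar s (πf s)
          ≤ (Qstar s (πstar s) - f s (πstar s)) - (Qstar s (πf s) - f s (πf s)) := by
        simp only [hVs]; linarith
      calc Vs s - Qstar s (πf s)
          ≤ (Qstar s (πstar s) - f s (πstar s)) - (Qstar s (πf s) - f s (πf s)) := h6
        _ ≤ |Qstar s (πstar s) - f s (πstar s)| + |Qstar s (πf s) - f s (πf s)| := by
            have := le_abs_self (Qstar s (πstar s) - f s (πstar s))
            have := neg_abs_le (Qstar s (πf s) - f s (πf s))
            linarith
    calc D h ≤ ∑ s, η h s * (|Qstar s (πstar s) - f s (πstar s)|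
                + |Qstar s (πf s) - f s (πf s)|) := by
          apply Finset.sum_le_sum
          intro s _
          exact mul_le_mul_of_nonneg_left (hpt s) ((hprob h).1 s)
      _ = (∑ s, η h s * |Qstar s (πstar s) - f s (πstar s)|)
            + ∑ s, η h s * |Qstar s (πf s) - f s (πf s)| := by
          rw [← Finset.sum_add_distrib]
          refine Finset.sum_congr rfl fun s _ => by ring
      _ ≤ B h := add_le_add (hCS h _) (hCS h _)
  have hB0 : ∀ h, 0 ≤ B h := fun h => add_nonneg (Real.sqrt_nonneg _) (Real.sqrt_nonneg _)
  -- uniform bound on B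
  set Cb : ℝ := Real.sqrt (∑ s, (Qstar s (πstar s) - f s (πstar s)) ^ 2)
      + Real.sqrt (∑ s, (Qstar s (πf s) - f s (πf s)) ^ 2) with hCb
  have hBC : ∀ h, B h ≤ Cb := by
    intro h
    apply add_le_add <;>
    · apply Real.sqrt_le_sqrt
      apply Finset.sum_le_sum
      intro s _
      exact mul_le_of_le_one_left (sq_nonneg _) (hle1 h s)
  have hCb0 : 0 ≤ Cb := add_nonneg (Real.sqrt_nonneg _) (Real.sqrt_nonneg _)
  -- summability
  have hsum : Summable (fun h => γ ^ h * B h) := by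
    apply Summable.of_nonneg_of_le
      (fun h => mul_nonneg (pow_nonneg hγ0 h) (hB0 h))
      (fun h => mul_le_mul_of_nonneg_left (hBC h) (pow_nonneg hγ0 h))
    exact (summable_geometric_of_lt_one hγ0 hγ1).mul_right Cb
  set T : ℝ := ∑' h : ℕ, γ ^ h * B h with hT
  -- E 0 ≤ T + γ^H * C for all H
  have hkey : ∀ H, E 0 ≤ T + γ ^ H * C := by
    intro H
    rw [htel H]
    apply add_le_add
    · calc ∑ h ∈ Finset.range H, γ ^ h * D h
          ≤ ∑ h ∈ Finset.range H, γ ^ h * B h := by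
            apply Finset.sum_le_sum
            intro h _
            exact mul_le_mul_of_nonneg_left (hDB h) (pow_nonneg hγ0 h)
        _ ≤ T := Summable.sum_le_tsum _
            (fun h _ => mul_nonneg (pow_nonneg hγ0 h) (hB0 h)) hsum
    · calc γ ^ H * E H ≤ γ ^ H * |E H| :=
            mul_le_mul_of_nonneg_left (le_abs_self _) (pow_nonneg hγ0 H)
        _ ≤ γ ^ H * C := mul_le_mul_of_nonneg_left (hC H) (pow_nonneg hγ0 H)
  -- take limit
  have hlim : Filter.Tendsto (fun H : ℕ => T + γ ^ H * C) Filter.atTop (nhds T) := by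
    have h7 : Filter.Tendsto (fun H : ℕ => γ ^ H) Filter.atTop (nhds 0) :=
      tendsto_pow_atTop_nhds_zero_of_lt_one hγ0 hγ1
    have h8 := (h7.mul_const C).const_add T
    simpa using h8
  have hE0 : E 0 ≤ T := ge_of_tendsto hlim (Filter.Eventually.of_forall hkey)
  -- conclude
  have hfin : (∑ s, η1 s * Qstar s (πstar s)) - (∑ s, η1 s * Vπ s) = E 0 := by
    rw [hE]
    simp only [hη_zero, hVs]
    rw [← Finset.sum_sub_distrib]
    refine Finset.sum_congr rfl fun s _ => by ring
  rw [hfin]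
  exact hE0
end

section
/- Assume every admissible distribution ν satisfies ν(s,a) ≤ C·μ(s,a) for all (s,a). Then for any admissible distribution ν and any functions f, f' : S×A → ℝ: ‖f - Q*‖_{2,ν} ≤ √C·‖f - Tf'‖_{2,μ} + γ·‖f' - Q*‖_{2, P(ν)×π_{f',Q*}}, where π_{f',Q*}(s) = argmax_a max{f'(s,a), Q*(s,a)}. -/
open Finset

lemma cauchy_w {ι : Type*} [Fintype ι] (w x y : ι → ℝ) (hw : ∀ i, 0 ≤ w i) :
    ∑ i, w i * (x i * y i) ≤
      Real.sqrt (∑ i, w i * x i ^ 2) * Real.sqrt (∑ i, w i * y i ^ 2) := by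
  have h := Finset.sum_mul_sq_le_sq_mul_sq Finset.univ
    (fun i => Real.sqrt (w i) * x i) (fun i => Real.sqrt (w i) * y i)
  have e1 : ∀ i : ι, (Real.sqrt (w i) * x i) * (Real.sqrt (w i) * y i) = w i * (x i * y i) := by
    intro i
    rw [mul_mul_mul_comm, Real.mul_self_sqrt (hw i)]
  have e2 : ∀ i : ι, (Real.sqrt (w i) * x i) ^ 2 = w i * x i ^ 2 := by
    intro i; rw [mul_pow, Real.sq_sqrt (hw i)]
  have e3 : ∀ i : ι, (Real.sqrt (w i) * y i) ^ 2 = w i * y i ^ 2 := by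
    intro i; rw [mul_pow, Real.sq_sqrt (hw i)]
  simp only [e1, e2, e3] at h
  have hA : (0:ℝ) ≤ ∑ i, w i * x i ^ 2 :=
    sum_nonneg fun i _ => mul_nonneg (hw i) (sq_nonneg _)
  have hB : (0:ℝ) ≤ ∑ i, w i * y i ^ 2 :=
    sum_nonneg fun i _ => mul_nonneg (hw i) (sq_nonneg _)
  calc ∑ i, w i * (x i * y i) ≤ |∑ i, w i * (x i * y i)| := le_abs_self _
    _ = Real.sqrt ((∑ i, w i * (x i * y i)) ^ 2) := (Real.sqrt_sq_eq_abs _).symm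
    _ ≤ Real.sqrt ((∑ i, w i * x i ^ 2) * (∑ i, w i * y i ^ 2)) := Real.sqrt_le_sqrt h
    _ = _ := Real.sqrt_mul hA _

lemma l2_tri {ι : Type*} [Fintype ι] (w x y : ι → ℝ) (hw : ∀ i, 0 ≤ w i) :
    Real.sqrt (∑ i, w i * (x i + y i) ^ 2) ≤
      Real.sqrt (∑ i, w i * x i ^ 2) + Real.sqrt (∑ i, w i * y i ^ 2) := by
  set A := ∑ i, w i * x i ^ 2 with hAdef
  set B := ∑ i, w i * y i ^ 2 with hBdef
  have hA : (0:ℝ) ≤ A := sum_nonneg fun i _ => mul_nonneg (hw i) (sq_nonneg _)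
  have hB : (0:ℝ) ≤ B := sum_nonneg fun i _ => mul_nonneg (hw i) (sq_nonneg _)
  have hcs := cauchy_w w x y hw
  have expand : ∑ i, w i * (x i + y i) ^ 2 = A + B + 2 * ∑ i, w i * (x i * y i) := by
    rw [hAdef, hBdef, ← Finset.sum_add_distrib, Finset.mul_sum, ← Finset.sum_add_distrib]
    exact Finset.sum_congr rfl fun i _ => by ring
  have h1 : ∑ i, w i * (x i + y i) ^ 2 ≤ (Real.sqrt A + Real.sqrt B) ^ 2 := by
    rw [expand]
    have : (Real.sqrt A + Real.sqrt B) ^ 2 = A + B + 2 * (Real.sqrt A * Real.sqrt B) := by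
      rw [add_sq, Real.sq_sqrt hA, Real.sq_sqrt hB]; ring
    rw [this]
    linarith
  calc Real.sqrt (∑ i, w i * (x i + y i) ^ 2) ≤
      Real.sqrt ((Real.sqrt A + Real.sqrt B) ^ 2) := Real.sqrt_le_sqrt h1
    _ = Real.sqrt A + Real.sqrt B := by
        rw [Real.sqrt_sq (by positivity)]

lemma key_max {A : Type*} [Fintype A] [Nonempty A] (g q : A → ℝ) (p : A)
    (hp : (⨆ a, max (g a) (q a)) = max (g p) (q p)) :
    |(⨆ a, g a) - ⨆ a, q a| ≤ |g p - q p| := by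
  have bdd : ∀ h : A → ℝ, BddAbove (Set.range h) :=
    fun h => Set.Finite.bddAbove (Set.finite_range h)
  have hF : (⨆ a, g a) ≤ max (g p) (q p) := by
    rw [← hp]; exact ciSup_mono (bdd _) fun a => le_max_left _ _
  have hQ : (⨆ a, q a) ≤ max (g p) (q p) := by
    rw [← hp]; exact ciSup_mono (bdd _) fun a => le_max_right _ _
  have hgp : g p ≤ ⨆ a, g a := le_ciSup (bdd _) p
  have hqp : q p ≤ ⨆ a, q a := le_ciSup (bdd _) p
  rw [abs_sub_le_iff]
  have habs := abs_nonneg (g p - q p)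
  constructor
  · rcases max_cases (g p) (q p) with ⟨h, _⟩ | ⟨h, _⟩
    · rw [h] at hF
      calc (⨆ a, g a) - ⨆ a, q a ≤ g p - q p := by linarith
        _ ≤ |g p - q p| := le_abs_self _
    · rw [h] at hF; linarith
  · rcases max_cases (g p) (q p) with ⟨h, _⟩ | ⟨h, _⟩
    · rw [h] at hQ; linarith
    · rw [h] at hQ
      calc (⨆ a, q a) - ⨆ a, g a ≤ q p - g p := by linarith
        _ ≤ |g p - q p| := by rw [abs_sub_comm]; exact le_abs_self _

/-- One-step error expansion: if `ν(s,a) ≤ C·μ(s,a)`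
pointwise (as holds for every admissible `ν` under the concentratability
assumption), then for any `f, f' : S×A → ℝ`:
`‖f - Q*‖_{2,ν} ≤ √C·‖f - Tf'‖_{2,μ} + γ·‖f' - Q*‖_{2,P(ν)×π_{f',Q*}}`,
where `π_{f',Q*}(s) = argmax_a max{f'(s,a), Q*(s,a)}` and
`P(ν)(s') = Σ_{s,a} ν(s,a) P(s'|s,a)`. -/
theorem stmt4 {S A : Type*} [Fintype S] [Fintype A] [Nonempty A]
    (P : S → A → S → ℝ) (R : S → A → ℝ) (γ C : ℝ)
    (μ ν : S → A → ℝ)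
    (hγ0 : 0 ≤ γ) (hγ1 : γ < 1)
    (hP0 : ∀ s a s', 0 ≤ P s a s') (hP1 : ∀ s a, ∑ s', P s a s' = 1)
    (hμ0 : ∀ s a, 0 ≤ μ s a) (hμ1 : ∑ s, ∑ a, μ s a = 1)
    (hν0 : ∀ s a, 0 ≤ ν s a) (hν1 : ∑ s, ∑ a, ν s a = 1)
    (hC : ∀ s a, ν s a ≤ C * μ s a)
    (Qstar : S → A → ℝ)
    -- Q* is the Bellman fixed point: Q* = T Q*
    (hQ : ∀ s a, Qstar s a = R s a + γ * ∑ s', P s a s' * ⨆ a', Qstar s' a')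
    (f f' : S → A → ℝ) (π : S → A)
    -- π = π_{f',Q*}
    (hπ : ∀ s, (⨆ a, max (f' s a) (Qstar s a)) = max (f' s (π s)) (Qstar s (π s))) :
    Real.sqrt (∑ s, ∑ a, ν s a * (f s a - Qstar s a) ^ 2)
      ≤ Real.sqrt C *
          Real.sqrt (∑ s, ∑ a, μ s a *
            (f s a - (R s a + γ * ∑ s', P s a s' * ⨆ a', f' s' a')) ^ 2)
        + γ * Real.sqrt (∑ s', (∑ s, ∑ a, ν s a * P s a s') *
            (f' s' (π s') - Qstar s' (π s')) ^ 2) := by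
  classical
  -- notation
  set T : S → A → ℝ := fun s a => R s a + γ * ∑ s', P s a s' * ⨆ a', f' s' a' with hT
  set d : S → ℝ := fun s' => f' s' (π s') - Qstar s' (π s') with hd
  have hC0 : 0 ≤ C := by
    have h1 : (1:ℝ) ≤ ∑ s, ∑ a, C * μ s a := by
      rw [← hν1]
      exact Finset.sum_le_sum fun s _ => Finset.sum_le_sum fun a _ => hC s a
    have h2 : ∑ s, ∑ a, C * μ s a = C := by
      simp only [← Finset.mul_sum, hμ1, mul_one]
    nlinarith
  -- triangle inequality step over the product type
  have tri := l2_tri (ι := S × A) (fun p => ν p.1 p.2)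
      (fun p => f p.1 p.2 - T p.1 p.2) (fun p => T p.1 p.2 - Qstar p.1 p.2)
      (fun p => hν0 p.1 p.2)
  simp only [sub_add_sub_cancel] at tri
  rw [show (∑ s, ∑ a, ν s a * (f s a - Qstar s a) ^ 2)
      = ∑ p : S × A, ν p.1 p.2 * (f p.1 p.2 - Qstar p.1 p.2) ^ 2 from
      (Fintype.sum_prod_type
        (fun p : S × A => ν p.1 p.2 * (f p.1 p.2 - Qstar p.1 p.2) ^ 2)).symm]
  refine le_trans tri (add_le_add ?_ ?_)
  · -- first term: change of measure
    have hle : (∑ p : S × A, ν p.1 p.2 * (f p.1 p.2 - T p.1 p.2) ^ 2)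
        ≤ C * ∑ s, ∑ a, μ s a * (f s a - T s a) ^ 2 := by
      rw [Finset.mul_sum]
      rw [Fintype.sum_prod_type]
      refine Finset.sum_le_sum fun s _ => ?_
      rw [Finset.mul_sum]
      refine Finset.sum_le_sum fun a _ => ?_
      rw [← mul_assoc]
      exact mul_le_mul_of_nonneg_right (hC s a) (sq_nonneg _)
    calc Real.sqrt (∑ p : S × A, ν p.1 p.2 * (f p.1 p.2 - T p.1 p.2) ^ 2)
        ≤ Real.sqrt (C * ∑ s, ∑ a, μ s a * (f s a - T s a) ^ 2) := Real.sqrt_le_sqrt hle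
      _ = _ := by rw [Real.sqrt_mul hC0]
  · -- second term
    have hbdd : ∀ h : A → ℝ, BddAbove (Set.range h) :=
      fun h => Set.Finite.bddAbove (Set.finite_range h)
    -- pointwise bound on (T - Q*)^2
    have hpt : ∀ s a, (T s a - Qstar s a) ^ 2 ≤ γ ^ 2 * ∑ s', P s a s' * d s' ^ 2 := by
      intro s a
      have hTQ : T s a - Qstar s a
          = γ * ∑ s', P s a s' * ((⨆ a', f' s' a') - ⨆ a', Qstar s' a') := by
        have hsplit : ∑ s', P s a s' * ((⨆ a', f' s' a') - ⨆ a', Qstar s' a')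
            = (∑ s', P s a s' * ⨆ a', f' s' a') - ∑ s', P s a s' * ⨆ a', Qstar s' a' := by
          rw [← Finset.sum_sub_distrib]
          exact Finset.sum_congr rfl fun s' _ => by ring
        rw [hQ s a]
        simp only [hT]
        rw [hsplit]
        ring
      rw [hTQ, mul_pow]
      refine mul_le_mul_of_nonneg_left ?_ (sq_nonneg γ)
      -- Jensen via Cauchy-Schwarz
      have hcs := Finset.sum_mul_sq_le_sq_mul_sq Finset.univ
        (fun s' => Real.sqrt (P s a s'))
        (fun s' => Real.sqrt (P s a s') * ((⨆ a', f' s' a') - ⨆ a', Qstar s' a'))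
      have e1 : ∀ s', Real.sqrt (P s a s') *
          (Real.sqrt (P s a s') * ((⨆ a', f' s' a') - ⨆ a', Qstar s' a'))
          = P s a s' * ((⨆ a', f' s' a') - ⨆ a', Qstar s' a') := by
        intro s'; rw [← mul_assoc, Real.mul_self_sqrt (hP0 s a s')]
      have e2 : ∀ s', (Real.sqrt (P s a s')) ^ 2 = P s a s' := fun s' =>
        Real.sq_sqrt (hP0 s a s')
      have e3 : ∀ s', (Real.sqrt (P s a s') * ((⨆ a', f' s' a') - ⨆ a', Qstar s' a')) ^ 2
          = P s a s' * ((⨆ a', f' s' a') - ⨆ a', Qstar s' a') ^ 2 := by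
        intro s'; rw [mul_pow, Real.sq_sqrt (hP0 s a s')]
      simp only [e1, e2, e3, hP1 s a, one_mul] at hcs
      refine le_trans hcs ?_
      refine Finset.sum_le_sum fun s' _ => ?_
      refine mul_le_mul_of_nonneg_left ?_ (hP0 s a s')
      calc ((⨆ a', f' s' a') - ⨆ a', Qstar s' a') ^ 2
          ≤ |f' s' (π s') - Qstar s' (π s')| ^ 2 := by
            rw [← sq_abs]
            exact pow_le_pow_left₀ (abs_nonneg _) (key_max (f' s') (Qstar s') (π s') (hπ s')) 2
        _ = d s' ^ 2 := by rw [sq_abs]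
    -- sum the pointwise bound and swap sums
    have hsum : (∑ p : S × A, ν p.1 p.2 * (T p.1 p.2 - Qstar p.1 p.2) ^ 2)
        ≤ γ ^ 2 * ∑ s', (∑ s, ∑ a, ν s a * P s a s') * d s' ^ 2 := by
      have step1 : (∑ p : S × A, ν p.1 p.2 * (T p.1 p.2 - Qstar p.1 p.2) ^ 2)
          ≤ ∑ p : S × A, ν p.1 p.2 * (γ ^ 2 * ∑ s', P p.1 p.2 s' * d s' ^ 2) :=
        Finset.sum_le_sum fun p _ =>
          mul_le_mul_of_nonneg_left (hpt p.1 p.2) (hν0 p.1 p.2)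
      refine le_trans step1 (le_of_eq ?_)
      calc ∑ p : S × A, ν p.1 p.2 * (γ ^ 2 * ∑ s', P p.1 p.2 s' * d s' ^ 2)
          = ∑ p : S × A, ∑ s', γ ^ 2 * (ν p.1 p.2 * P p.1 p.2 s' * d s' ^ 2) := by
            refine Finset.sum_congr rfl fun p _ => ?_
            rw [Finset.mul_sum, Finset.mul_sum]
            exact Finset.sum_congr rfl fun s' _ => by ring
        _ = ∑ s', ∑ p : S × A, γ ^ 2 * (ν p.1 p.2 * P p.1 p.2 s' * d s' ^ 2) :=
            Finset.sum_comm
        _ = γ ^ 2 * ∑ s', (∑ s, ∑ a, ν s a * P s a s') * d s' ^ 2 := by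
            rw [Finset.mul_sum]
            refine Finset.sum_congr rfl fun s' _ => ?_
            rw [show (∑ s, ∑ a, ν s a * P s a s') = ∑ p : S × A, ν p.1 p.2 * P p.1 p.2 s' from
              (Fintype.sum_prod_type (fun p : S × A => ν p.1 p.2 * P p.1 p.2 s')).symm]
            rw [Finset.sum_mul, Finset.mul_sum]
    calc Real.sqrt (∑ p : S × A, ν p.1 p.2 * (T p.1 p.2 - Qstar p.1 p.2) ^ 2)
        ≤ Real.sqrt (γ ^ 2 * ∑ s', (∑ s, ∑ a, ν s a * P s a s') * d s' ^ 2) :=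
          Real.sqrt_le_sqrt hsum
      _ = γ * Real.sqrt (∑ s', (∑ s, ∑ a, ν s a * P s a s') * d s' ^ 2) := by
          rw [Real.sqrt_mul (sq_nonneg γ), Real.sqrt_sq hγ0]
end

section
/- Assume every admissible distribution ν satisfies ν(s,a) ≤ C·μ(s,a) for all (s,a). Then for any admissible distribution ν and any f : S×A → [0, V_max]: ‖f - Q*‖_{2,ν} ≤ (√C / (1-γ)) · ‖f - Tf‖_{2,μ}. That is, the distance of f to Q* under any admissible distribution is controlled by the Bellman error of f under the data distribution, amplified by √C/(1-γ). -/
open Finset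

/-- A (possibly non-stationary, stochastic) policy. -/
def IsPolicy {S A : Type*} [Fintype A] (π : ℕ → S → A → ℝ) : Prop :=
  ∀ h s, (∀ a, 0 ≤ π h s a) ∧ ∑ a, π h s a = 1

/-- The state distribution at step `h` obtained by following the
non-stationary policy `π` from the initial distribution `η1`. -/
def stateDist {S A : Type*} [Fintype S] [Fintype A]
    (P : S → A → S → ℝ) (η1 : S → ℝ) (π : ℕ → S → A → ℝ) : ℕ → S → ℝ
  | 0 => η1
  | h + 1 => fun s' => ∑ s, ∑ a, stateDist P η1 π h s * π h s a * P s a s'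

/-- A state-action distribution is admissible if it is induced by some
policy `π` at some timestep `h`, starting from `η1`. -/
def Admissible {S A : Type*} [Fintype S] [Fintype A]
    (P : S → A → S → ℝ) (η1 : S → ℝ) (ν : S → A → ℝ) : Prop :=
  ∃ π : ℕ → S → A → ℝ, IsPolicy π ∧
    ∃ h : ℕ, ∀ s a, ν s a = stateDist P η1 π h s * π h s a

/-- Weighted Cauchy–Schwarz / Jensen: `(∑ p x)² ≤ (∑ p)·(∑ p x²)`. -/
lemma wsum_cs {ι : Type*} (s : Finset ι) (p x : ι → ℝ) (hp : ∀ i ∈ s, 0 ≤ p i) :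
    (∑ i ∈ s, p i * x i) ^ 2 ≤ (∑ i ∈ s, p i) * ∑ i ∈ s, p i * x i ^ 2 :=
  sum_sq_le_sum_mul_sum_of_sq_eq_mul s hp (fun i hi => mul_nonneg (hp i hi) (sq_nonneg _))
    (fun i _ => by ring)

/-- Weighted L² triangle inequality. -/
lemma wsum_triangle {ι : Type*} (s : Finset ι) (w x y : ι → ℝ) (hw : ∀ i ∈ s, 0 ≤ w i) :
    Real.sqrt (∑ i ∈ s, w i * (x i + y i) ^ 2)
      ≤ Real.sqrt (∑ i ∈ s, w i * x i ^ 2) + Real.sqrt (∑ i ∈ s, w i * y i ^ 2) := by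
  set X := Real.sqrt (∑ i ∈ s, w i * x i ^ 2) with hX
  set Y := Real.sqrt (∑ i ∈ s, w i * y i ^ 2) with hY
  have hXnn : 0 ≤ X := Real.sqrt_nonneg _
  have hYnn : 0 ≤ Y := Real.sqrt_nonneg _
  have hX2 : X ^ 2 = ∑ i ∈ s, w i * x i ^ 2 :=
    Real.sq_sqrt (sum_nonneg fun i hi => mul_nonneg (hw i hi) (sq_nonneg _))
  have hY2 : Y ^ 2 = ∑ i ∈ s, w i * y i ^ 2 :=
    Real.sq_sqrt (sum_nonneg fun i hi => mul_nonneg (hw i hi) (sq_nonneg _))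
  have cs : (∑ i ∈ s, w i * (x i * y i)) ^ 2 ≤ X ^ 2 * Y ^ 2 := by
    rw [hX2, hY2]
    have h1 : ∑ i ∈ s, w i * (x i * y i)
        = ∑ i ∈ s, (Real.sqrt (w i) * x i) * (Real.sqrt (w i) * y i) :=
      sum_congr rfl fun i hi => by
        rw [mul_mul_mul_comm, Real.mul_self_sqrt (hw i hi)]
    have h2 : ∑ i ∈ s, (Real.sqrt (w i) * x i) ^ 2 = ∑ i ∈ s, w i * x i ^ 2 :=
      sum_congr rfl fun i hi => by rw [mul_pow, Real.sq_sqrt (hw i hi)]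
    have h3 : ∑ i ∈ s, (Real.sqrt (w i) * y i) ^ 2 = ∑ i ∈ s, w i * y i ^ 2 :=
      sum_congr rfl fun i hi => by rw [mul_pow, Real.sq_sqrt (hw i hi)]
    rw [h1, ← h2, ← h3]
    exact sum_mul_sq_le_sq_mul_sq s _ _
  have cross : ∑ i ∈ s, w i * (x i * y i) ≤ X * Y := by
    have h := Real.sqrt_le_sqrt cs
    rw [Real.sqrt_sq_eq_abs] at h
    have he : X ^ 2 * Y ^ 2 = (X * Y) ^ 2 := by ring
    rw [he, Real.sqrt_sq (mul_nonneg hXnn hYnn)] at h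
    exact (le_abs_self _).trans h
  have expand : ∑ i ∈ s, w i * (x i + y i) ^ 2
      = X ^ 2 + 2 * (∑ i ∈ s, w i * (x i * y i)) + Y ^ 2 := by
    rw [hX2, hY2, mul_sum, ← sum_add_distrib, ← sum_add_distrib]
    exact sum_congr rfl fun i _ => by ring
  have hle : ∑ i ∈ s, w i * (x i + y i) ^ 2 ≤ (X + Y) ^ 2 := by nlinarith [cross]
  calc Real.sqrt (∑ i ∈ s, w i * (x i + y i) ^ 2) ≤ Real.sqrt ((X + Y) ^ 2) :=
        Real.sqrt_le_sqrt hle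
    _ = X + Y := Real.sqrt_sq (add_nonneg hXnn hYnn)

lemma stateDist_nonneg {S A : Type*} [Fintype S] [Fintype A]
    {P : S → A → S → ℝ} {η1 : S → ℝ} {π : ℕ → S → A → ℝ}
    (hP0 : ∀ s a s', 0 ≤ P s a s') (hη0 : ∀ s, 0 ≤ η1 s) (hπ : IsPolicy π) :
    ∀ h s, 0 ≤ stateDist P η1 π h s := by
  intro h
  induction h with
  | zero => exact hη0
  | succ h ih =>
    intro s'
    exact sum_nonneg fun s _ => sum_nonneg fun a _ =>
      mul_nonneg (mul_nonneg (ih s) ((hπ h s).1 a)) (hP0 s a s')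

lemma stateDist_sum {S A : Type*} [Fintype S] [Fintype A]
    {P : S → A → S → ℝ} {η1 : S → ℝ} {π : ℕ → S → A → ℝ}
    (hP1 : ∀ s a, ∑ s', P s a s' = 1) (hη1 : ∑ s, η1 s = 1) (hπ : IsPolicy π) :
    ∀ h, ∑ s, stateDist P η1 π h s = 1 := by
  intro h
  induction h with
  | zero => exact hη1
  | succ h ih =>
    show ∑ s', ∑ s, ∑ a, stateDist P η1 π h s * π h s a * P s a s' = 1
    rw [sum_comm]
    calc ∑ s, ∑ s', ∑ a, stateDist P η1 π h s * π h s a * P s a s'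
        = ∑ s, stateDist P η1 π h s := by
          refine sum_congr rfl fun s _ => ?_
          rw [sum_comm]
          calc ∑ a, ∑ s', stateDist P η1 π h s * π h s a * P s a s'
              = ∑ a, stateDist P η1 π h s * π h s a := by
                refine sum_congr rfl fun a _ => ?_
                rw [← mul_sum, hP1 s a, mul_one]
            _ = stateDist P η1 π h s := by rw [← mul_sum, (hπ h s).2, mul_one]
      _ = 1 := ih

lemma stateDist_congr {S A : Type*} [Fintype S] [Fintype A]
    {P : S → A → S → ℝ} {η1 : S → ℝ} {π π' : ℕ → S → A → ℝ} (m : ℕ)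
    (hagree : ∀ k, k < m → π k = π' k) :
    stateDist P η1 π m = stateDist P η1 π' m := by
  induction m with
  | zero => rfl
  | succ h ih =>
    funext s'
    show (∑ s, ∑ a, stateDist P η1 π h s * π h s a * P s a s')
        = ∑ s, ∑ a, stateDist P η1 π' h s * π' h s a * P s a s'
    rw [ih (fun k hk => hagree k (Nat.lt_succ_of_lt hk)), hagree h (Nat.lt_succ_self h)]

/-- If every admissible distribution `ν` satisfies
`ν(s,a) ≤ C·μ(s,a)`, then for any admissible `ν` and any
`f : S×A → [0,V_max]`:
`‖f - Q*‖_{2,ν} ≤ (√C/(1-γ)) · ‖f - Tf‖_{2,μ}`. -/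
theorem stmt5 {S A : Type*} [Fintype S] [Fintype A] [Nonempty A]
    (P : S → A → S → ℝ) (R : S → A → ℝ) (γ C Rmax Vmax : ℝ)
    (μ : S → A → ℝ) (η1 : S → ℝ)
    (hγ0 : 0 ≤ γ) (hγ1 : γ < 1) (hV : Vmax = Rmax / (1 - γ))
    (hP0 : ∀ s a s', 0 ≤ P s a s') (hP1 : ∀ s a, ∑ s', P s a s' = 1)
    (hR : ∀ s a, 0 ≤ R s a ∧ R s a ≤ Rmax)
    (hμ0 : ∀ s a, 0 ≤ μ s a) (hμ1 : ∑ s, ∑ a, μ s a = 1)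
    (hη0 : ∀ s, 0 ≤ η1 s) (hη1 : ∑ s, η1 s = 1)
    (hC : ∀ ν, Admissible P η1 ν → ∀ s a, ν s a ≤ C * μ s a)
    (Qstar : S → A → ℝ)
    -- Q* is the Bellman fixed point: Q* = T Q*
    (hQ : ∀ s a, Qstar s a = R s a + γ * ∑ s', P s a s' * ⨆ a', Qstar s' a')
    (f : S → A → ℝ) (hf : ∀ s a, 0 ≤ f s a ∧ f s a ≤ Vmax) :
    ∀ ν, Admissible P η1 ν →
      Real.sqrt (∑ s, ∑ a, ν s a * (f s a - Qstar s a) ^ 2)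
        ≤ (Real.sqrt C / (1 - γ)) *
            Real.sqrt (∑ s, ∑ a, μ s a *
              (f s a - (R s a + γ * ∑ s', P s a s' * ⨆ a', f s' a')) ^ 2) := by
  classical
  -- if `S` is empty, `hμ1` is contradictory
  cases isEmpty_or_nonempty S with
  | inl hS => exfalso; simpa using hμ1
  | inr hS =>
  have hγpos : 0 < 1 - γ := by linarith
  -- the Bellman image of `f`
  obtain ⟨Tf, hTf⟩ : ∃ Tf : S → A → ℝ,
      ∀ s a, Tf s a = R s a + γ * ∑ s', P s a s' * ⨆ a', f s' a' :=
    ⟨_, fun s a => rfl⟩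
  set E : ℝ := Real.sqrt (∑ s, ∑ a, μ s a * (f s a - Tf s a) ^ 2) with hE
  have hE0 : 0 ≤ E := Real.sqrt_nonneg _
  -- boundedness of suprema
  have hbddQ : ∀ s', BddAbove (Set.range fun a' => Qstar s' a') :=
    fun s' => Set.Finite.bddAbove (Set.finite_range _)
  have hbddf : ∀ s', BddAbove (Set.range fun a' => f s' a') :=
    fun s' => Set.Finite.bddAbove (Set.finite_range _)
  -- bounds on Q*
  obtain ⟨p₀, -, hmax⟩ := Finset.exists_max_image (univ : Finset (S × A))
    (fun p => Qstar p.1 p.2) univ_nonempty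
  obtain ⟨p₁, -, hmin⟩ := Finset.exists_min_image (univ : Finset (S × A))
    (fun p => Qstar p.1 p.2) univ_nonempty
  obtain ⟨s₀, a₀⟩ := p₀
  obtain ⟨s₁, a₁⟩ := p₁
  have hQmax : Qstar s₀ a₀ ≤ Vmax := by
    have h1 : ∀ s', (⨆ a', Qstar s' a') ≤ Qstar s₀ a₀ := fun s' =>
      ciSup_le fun a' => hmax (s', a') (mem_univ _)
    have hle : ∑ s', P s₀ a₀ s' * ⨆ a', Qstar s' a' ≤ ∑ s', P s₀ a₀ s' * Qstar s₀ a₀ :=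
      sum_le_sum fun s' _ => mul_le_mul_of_nonneg_left (h1 s') (hP0 _ _ _)
    have hsum : ∑ s', P s₀ a₀ s' * Qstar s₀ a₀ = Qstar s₀ a₀ := by
      rw [← sum_mul, hP1, one_mul]
    have h2 : Qstar s₀ a₀ ≤ Rmax + γ * Qstar s₀ a₀ :=
      calc Qstar s₀ a₀ = R s₀ a₀ + γ * ∑ s', P s₀ a₀ s' * ⨆ a', Qstar s' a' := hQ s₀ a₀
        _ ≤ Rmax + γ * Qstar s₀ a₀ := add_le_add (hR s₀ a₀).2
            (mul_le_mul_of_nonneg_left (hle.trans_eq hsum) hγ0)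
    rw [hV, le_div_iff₀ hγpos]
    nlinarith [h2]
  have hQmin : 0 ≤ Qstar s₁ a₁ := by
    have h1 : ∀ s', Qstar s₁ a₁ ≤ ⨆ a', Qstar s' a' := fun s' =>
      (hmin (s', a₁) (mem_univ _)).trans (le_ciSup (hbddQ s') a₁)
    have hsum : Qstar s₁ a₁ = ∑ s', P s₁ a₁ s' * Qstar s₁ a₁ := by
      rw [← sum_mul, hP1, one_mul]
    have hle : ∑ s', P s₁ a₁ s' * Qstar s₁ a₁ ≤ ∑ s', P s₁ a₁ s' * ⨆ a', Qstar s' a' :=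
      sum_le_sum fun s' _ => mul_le_mul_of_nonneg_left (h1 s') (hP0 _ _ _)
    have h2 : γ * Qstar s₁ a₁ ≤ Qstar s₁ a₁ := by
      calc γ * Qstar s₁ a₁ = γ * ∑ s', P s₁ a₁ s' * Qstar s₁ a₁ := by rw [← hsum]
        _ ≤ γ * ∑ s', P s₁ a₁ s' * ⨆ a', Qstar s' a' := mul_le_mul_of_nonneg_left hle hγ0
        _ ≤ Qstar s₁ a₁ := by rw [hQ s₁ a₁]; linarith [(hR s₁ a₁).1]
    nlinarith [h2, hγpos]
  have hQb : ∀ s a, 0 ≤ Qstar s a ∧ Qstar s a ≤ Vmax := fun s a =>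
    ⟨hQmin.trans (hmin (s, a) (mem_univ _)), (hmax (s, a) (mem_univ _)).trans hQmax⟩
  have hVnn : 0 ≤ Vmax := le_trans (hQb s₀ a₀).1 (hQb s₀ a₀).2
  have hdiff : ∀ s a, (f s a - Qstar s a) ^ 2 ≤ Vmax ^ 2 := by
    intro s a
    have h1 := hf s a
    have h2 := hQb s a
    nlinarith [h1.1, h1.2, h2.1, h2.2]
  -- basic facts about admissible distributions
  have hadm : ∀ ν, Admissible P η1 ν → (∀ s a, 0 ≤ ν s a) ∧ ∑ s, ∑ a, ν s a = 1 := by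
    rintro ν ⟨π, hπ, h, hν⟩
    constructor
    · intro s a
      rw [hν]
      exact mul_nonneg (stateDist_nonneg hP0 hη0 hπ h s) ((hπ h s).1 a)
    · have h1 : ∑ s, ∑ a, ν s a = ∑ s, stateDist P η1 π h s := by
        refine sum_congr rfl fun s _ => ?_
        simp only [hν]
        rw [← mul_sum, (hπ h s).2, mul_one]
      rw [h1]
      exact stateDist_sum hP1 hη1 hπ h
  -- main recursion
  have key : ∀ n : ℕ, ∀ ν, Admissible P η1 ν →
      Real.sqrt (∑ s, ∑ a, ν s a * (f s a - Qstar s a) ^ 2)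
        ≤ Real.sqrt C * E * (∑ k ∈ range n, γ ^ k) + γ ^ n * Vmax := by
    intro n
    induction n with
    | zero =>
      intro ν hν
      simp only [range_zero, sum_empty, mul_zero, pow_zero, one_mul, zero_add]
      have hb : ∑ s, ∑ a, ν s a * (f s a - Qstar s a) ^ 2 ≤ Vmax ^ 2 := by
        calc ∑ s, ∑ a, ν s a * (f s a - Qstar s a) ^ 2
            ≤ ∑ s, ∑ a, ν s a * Vmax ^ 2 :=
              sum_le_sum fun s _ => sum_le_sum fun a _ =>
                mul_le_mul_of_nonneg_left (hdiff s a) ((hadm ν hν).1 s a)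
          _ = (∑ s, ∑ a, ν s a) * Vmax ^ 2 := by
              rw [sum_mul]
              exact sum_congr rfl fun s _ => by rw [sum_mul]
          _ = Vmax ^ 2 := by rw [(hadm ν hν).2, one_mul]
      calc Real.sqrt (∑ s, ∑ a, ν s a * (f s a - Qstar s a) ^ 2)
          ≤ Real.sqrt (Vmax ^ 2) := Real.sqrt_le_sqrt hb
        _ = Vmax := Real.sqrt_sq hVnn
    | succ n ih =>
      rintro ν ⟨π, hπ, h, hν⟩
      have hνadm : Admissible P η1 ν := ⟨π, hπ, h, hν⟩
      have hν0 : ∀ s a, 0 ≤ ν s a := (hadm ν hνadm).1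
      have hν1 : ∑ s, ∑ a, ν s a = 1 := (hadm ν hνadm).2
      have hC1 : (1:ℝ) ≤ C := by
        calc (1:ℝ) = ∑ s, ∑ a, ν s a := hν1.symm
          _ ≤ ∑ s, ∑ a, C * μ s a :=
            sum_le_sum fun s _ => sum_le_sum fun a _ => hC ν hνadm s a
          _ = C * ∑ s, ∑ a, μ s a := by
              rw [mul_sum]
              exact sum_congr rfl fun s _ => (mul_sum _ _ _).symm
          _ = C := by rw [hμ1, mul_one]
      have hC0 : (0:ℝ) ≤ C := zero_le_one.trans hC1
      -- triangle inequality
      have step1 : Real.sqrt (∑ s, ∑ a, ν s a * (f s a - Qstar s a) ^ 2)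
          ≤ Real.sqrt (∑ s, ∑ a, ν s a * (f s a - Tf s a) ^ 2)
            + Real.sqrt (∑ s, ∑ a, ν s a * (Tf s a - Qstar s a) ^ 2) := by
        have ht := wsum_triangle (univ : Finset (S × A)) (fun p => ν p.1 p.2)
          (fun p => f p.1 p.2 - Tf p.1 p.2) (fun p => Tf p.1 p.2 - Qstar p.1 p.2)
          (fun p _ => hν0 p.1 p.2)
        have he : ∀ p : S × A,
            (f p.1 p.2 - Tf p.1 p.2) + (Tf p.1 p.2 - Qstar p.1 p.2)
              = f p.1 p.2 - Qstar p.1 p.2 := fun p => by ring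
        simp only [he, Fintype.sum_prod_type] at ht
        exact ht
      -- first term: concentrability
      have step2 : Real.sqrt (∑ s, ∑ a, ν s a * (f s a - Tf s a) ^ 2)
          ≤ Real.sqrt C * E := by
        have hb : ∑ s, ∑ a, ν s a * (f s a - Tf s a) ^ 2
            ≤ C * ∑ s, ∑ a, μ s a * (f s a - Tf s a) ^ 2 := by
          rw [mul_sum]
          refine sum_le_sum fun s _ => ?_
          rw [mul_sum]
          refine sum_le_sum fun a _ => ?_
          rw [← mul_assoc]
          exact mul_le_mul_of_nonneg_right (hC ν hνadm s a) (sq_nonneg _)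
        calc Real.sqrt (∑ s, ∑ a, ν s a * (f s a - Tf s a) ^ 2)
            ≤ Real.sqrt (C * ∑ s, ∑ a, μ s a * (f s a - Tf s a) ^ 2) :=
              Real.sqrt_le_sqrt hb
          _ = Real.sqrt C * E := by rw [Real.sqrt_mul hC0, hE]
      -- second term: one-step expansion
      -- greedy (argmax of the error) action
      have hgex : ∀ s', ∃ a, ∀ a', (f s' a' - Qstar s' a') ^ 2 ≤ (f s' a - Qstar s' a) ^ 2 := by
        intro s'
        obtain ⟨a, -, ha⟩ := Finset.exists_max_image (univ : Finset A)
          (fun a => (f s' a - Qstar s' a) ^ 2) univ_nonempty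
        exact ⟨a, fun a' => ha a' (mem_univ _)⟩
      choose g hgmax using hgex
      -- the error of the suprema is dominated by the error at the greedy action
      have hsup : ∀ s', ((⨆ a', f s' a') - ⨆ a', Qstar s' a') ^ 2
          ≤ (f s' (g s') - Qstar s' (g s')) ^ 2 := by
        intro s'
        set M := |f s' (g s') - Qstar s' (g s')| with hM
        have hMn : 0 ≤ M := abs_nonneg _
        have habs : ∀ a', |f s' a' - Qstar s' a'| ≤ M := by
          intro a'
          calc |f s' a' - Qstar s' a'|
              = Real.sqrt ((f s' a' - Qstar s' a') ^ 2) := (Real.sqrt_sq_eq_abs _).symm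
            _ ≤ Real.sqrt ((f s' (g s') - Qstar s' (g s')) ^ 2) :=
                Real.sqrt_le_sqrt (hgmax s' a')
            _ = M := Real.sqrt_sq_eq_abs _
        have h1 : (⨆ a', f s' a') ≤ (⨆ a', Qstar s' a') + M := by
          refine ciSup_le fun a' => ?_
          have := (abs_le.mp (habs a')).2
          have hq : Qstar s' a' ≤ ⨆ a', Qstar s' a' := le_ciSup (hbddQ s') a'
          linarith
        have h2 : (⨆ a', Qstar s' a') ≤ (⨆ a', f s' a') + M := by
          refine ciSup_le fun a' => ?_
          have := (abs_le.mp (habs a')).1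
          have hq : f s' a' ≤ ⨆ a', f s' a' := le_ciSup (hbddf s') a'
          linarith
        calc ((⨆ a', f s' a') - ⨆ a', Qstar s' a') ^ 2 ≤ M ^ 2 :=
            sq_le_sq' (by linarith) (by linarith)
          _ = (f s' (g s') - Qstar s' (g s')) ^ 2 := sq_abs _
      -- pointwise bound on the Bellman-difference term
      have hTQ : ∀ s a, Tf s a - Qstar s a
          = γ * ∑ s', P s a s' * ((⨆ a', f s' a') - ⨆ a', Qstar s' a') := by
        intro s a
        have hsplit : ∑ s', P s a s' * ((⨆ a', f s' a') - ⨆ a', Qstar s' a')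
            = (∑ s', P s a s' * ⨆ a', f s' a') - ∑ s', P s a s' * ⨆ a', Qstar s' a' := by
          rw [← sum_sub_distrib]
          exact sum_congr rfl fun s' _ => by ring
        rw [hTf s a, hQ s a, hsplit]
        ring
      have hpt : ∀ s a, (Tf s a - Qstar s a) ^ 2
          ≤ γ ^ 2 * ∑ s', P s a s' * (f s' (g s') - Qstar s' (g s')) ^ 2 := by
        intro s a
        rw [hTQ s a, mul_pow]
        refine mul_le_mul_of_nonneg_left ?_ (sq_nonneg γ)
        have hcs := wsum_cs (univ : Finset S) (fun s' => P s a s')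
          (fun s' => (⨆ a', f s' a') - ⨆ a', Qstar s' a') (fun s' _ => hP0 s a s')
        rw [hP1 s a, one_mul] at hcs
        exact hcs.trans (sum_le_sum fun s' _ =>
          mul_le_mul_of_nonneg_left (hsup s') (hP0 s a s'))
      -- sum over ν, pushing to the next-step distribution
      have hρdef : ∀ s', stateDist P η1 π (h+1) s' = ∑ s, ∑ a, ν s a * P s a s' := by
        intro s'
        show (∑ s, ∑ a, stateDist P η1 π h s * π h s a * P s a s') = _
        exact sum_congr rfl fun s _ => sum_congr rfl fun a _ => by rw [hν s a]
      have hstep : ∑ s, ∑ a, ν s a * (Tf s a - Qstar s a) ^ 2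
          ≤ γ ^ 2 * ∑ s', stateDist P η1 π (h+1) s'
              * (f s' (g s') - Qstar s' (g s')) ^ 2 := by
        have hswap : ∑ s, ∑ a, ν s a *
              (γ ^ 2 * ∑ s', P s a s' * (f s' (g s') - Qstar s' (g s')) ^ 2)
            = γ ^ 2 * ∑ s', (∑ s, ∑ a, ν s a * P s a s')
                * (f s' (g s') - Qstar s' (g s')) ^ 2 := by
          have l1 : ∀ s a, ν s a *
                (γ ^ 2 * ∑ s', P s a s' * (f s' (g s') - Qstar s' (g s')) ^ 2)
              = ∑ s', γ ^ 2 * (ν s a * P s a s' * (f s' (g s') - Qstar s' (g s')) ^ 2) := by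
            intro s a
            rw [mul_sum, mul_sum]
            exact sum_congr rfl fun s' _ => by ring
          have r1 : ∀ s', γ ^ 2 * ((∑ s, ∑ a, ν s a * P s a s')
                * (f s' (g s') - Qstar s' (g s')) ^ 2)
              = ∑ s, ∑ a, γ ^ 2 * (ν s a * P s a s'
                * (f s' (g s') - Qstar s' (g s')) ^ 2) := by
            intro s'
            rw [sum_mul, mul_sum]
            refine sum_congr rfl fun s _ => ?_
            rw [sum_mul, mul_sum]
          simp only [l1]
          rw [mul_sum]
          simp only [r1]
          calc ∑ s, ∑ a, ∑ s', γ ^ 2 * (ν s a * P s a s'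
                * (f s' (g s') - Qstar s' (g s')) ^ 2)
              = ∑ s, ∑ s', ∑ a, γ ^ 2 * (ν s a * P s a s'
                * (f s' (g s') - Qstar s' (g s')) ^ 2) :=
              sum_congr rfl fun s _ => sum_comm
            _ = ∑ s', ∑ s, ∑ a, γ ^ 2 * (ν s a * P s a s'
                * (f s' (g s') - Qstar s' (g s')) ^ 2) := sum_comm
        calc ∑ s, ∑ a, ν s a * (Tf s a - Qstar s a) ^ 2
            ≤ ∑ s, ∑ a, ν s a *
                (γ ^ 2 * ∑ s', P s a s' * (f s' (g s') - Qstar s' (g s')) ^ 2) :=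
              sum_le_sum fun s _ => sum_le_sum fun a _ =>
                mul_le_mul_of_nonneg_left (hpt s a) (hν0 s a)
          _ = γ ^ 2 * ∑ s', (∑ s, ∑ a, ν s a * P s a s')
                * (f s' (g s') - Qstar s' (g s')) ^ 2 := hswap
          _ = γ ^ 2 * ∑ s', stateDist P η1 π (h+1) s'
                * (f s' (g s') - Qstar s' (g s')) ^ 2 := by
              congr 1
              exact sum_congr rfl fun s' _ => by rw [hρdef s']
      -- next-step admissible distribution (deterministic greedy policy)
      set ν' : S → A → ℝ :=
        fun s' a' => stateDist P η1 π (h+1) s' * if a' = g s' then 1 else 0 with hν'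
      set π' : ℕ → S → A → ℝ :=
        fun k => if k ≤ h then π k else fun s a => if a = g s then 1 else 0 with hπ'
      have hπ'pol : IsPolicy π' := by
        intro k s
        by_cases hk : k ≤ h
        · simpa [hπ', hk] using hπ k s
        · constructor
          · intro a
            simp only [hπ', hk, if_false]
            split <;> norm_num
          · simp [hπ', hk]
      have hsd : stateDist P η1 π' (h+1) = stateDist P η1 π (h+1) :=
        stateDist_congr (h+1) fun k hk => by
          have hkh : k ≤ h := Nat.lt_succ_iff.mp hk
          simp [hπ', hkh]
      have hν'adm : Admissible P η1 ν' := by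
        refine ⟨π', hπ'pol, h+1, fun s a => ?_⟩
        rw [hsd]
        have hnle : ¬ (h + 1 ≤ h) := Nat.not_succ_le_self h
        simp [hν', hπ', hnle]
      have hIH := ih ν' hν'adm
      have hind : ∀ s', ∑ a', ν' s' a' * (f s' a' - Qstar s' a') ^ 2
          = stateDist P η1 π (h+1) s' * (f s' (g s') - Qstar s' (g s')) ^ 2 := by
        intro s'
        rw [Finset.sum_eq_single (g s')]
        · simp [hν']
        · intro a' _ hne
          simp [hν', hne]
        · intro habs
          exact absurd (mem_univ _) habs
      have step3 : Real.sqrt (∑ s, ∑ a, ν s a * (Tf s a - Qstar s a) ^ 2)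
          ≤ γ * (Real.sqrt C * E * (∑ k ∈ range n, γ ^ k) + γ ^ n * Vmax) := by
        have hb2 : ∑ s, ∑ a, ν s a * (Tf s a - Qstar s a) ^ 2
            ≤ γ ^ 2 * ∑ s', ∑ a', ν' s' a' * (f s' a' - Qstar s' a') ^ 2 := by
          have : ∑ s', ∑ a', ν' s' a' * (f s' a' - Qstar s' a') ^ 2
              = ∑ s', stateDist P η1 π (h+1) s' * (f s' (g s') - Qstar s' (g s')) ^ 2 :=
            sum_congr rfl fun s' _ => hind s'
          rw [this]
          exact hstep
        calc Real.sqrt (∑ s, ∑ a, ν s a * (Tf s a - Qstar s a) ^ 2)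
            ≤ Real.sqrt (γ ^ 2 * ∑ s', ∑ a', ν' s' a' * (f s' a' - Qstar s' a') ^ 2) :=
              Real.sqrt_le_sqrt hb2
          _ = γ * Real.sqrt (∑ s', ∑ a', ν' s' a' * (f s' a' - Qstar s' a') ^ 2) := by
              rw [Real.sqrt_mul (sq_nonneg γ), Real.sqrt_sq hγ0]
          _ ≤ γ * (Real.sqrt C * E * (∑ k ∈ range n, γ ^ k) + γ ^ n * Vmax) :=
              mul_le_mul_of_nonneg_left hIH hγ0
      calc Real.sqrt (∑ s, ∑ a, ν s a * (f s a - Qstar s a) ^ 2)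
          ≤ Real.sqrt (∑ s, ∑ a, ν s a * (f s a - Tf s a) ^ 2)
            + Real.sqrt (∑ s, ∑ a, ν s a * (Tf s a - Qstar s a) ^ 2) := step1
        _ ≤ Real.sqrt C * E
            + γ * (Real.sqrt C * E * (∑ k ∈ range n, γ ^ k) + γ ^ n * Vmax) :=
            add_le_add step2 step3
        _ = Real.sqrt C * E * (∑ k ∈ range (n+1), γ ^ k) + γ ^ (n+1) * Vmax := by
            rw [geom_sum_succ]
            ring
  -- conclude by letting n → ∞
  intro ν hν
  have hC1 : (1:ℝ) ≤ C := by
    calc (1:ℝ) = ∑ s, ∑ a, ν s a := (hadm ν hν).2.symm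
      _ ≤ ∑ s, ∑ a, C * μ s a :=
        sum_le_sum fun s _ => sum_le_sum fun a _ => hC ν hν s a
      _ = C * ∑ s, ∑ a, μ s a := by
          rw [mul_sum]
          exact sum_congr rfl fun s _ => (mul_sum _ _ _).symm
      _ = C := by rw [hμ1, mul_one]
  have bound : ∀ n : ℕ, Real.sqrt (∑ s, ∑ a, ν s a * (f s a - Qstar s a) ^ 2)
      ≤ Real.sqrt C / (1 - γ) * E + γ ^ n * Vmax := by
    intro n
    refine (key n ν hν).trans ?_
    have hgeom : (∑ k ∈ range n, γ ^ k) ≤ (1 - γ)⁻¹ := by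
      have heq : ∑ k ∈ range n, γ ^ k = (1 - γ ^ n) / (1 - γ) := by
        rw [geom_sum_eq hγ1.ne n, ← neg_div_neg_eq, neg_sub, neg_sub]
      rw [heq, inv_eq_one_div]
      exact (div_le_div_iff_of_pos_right hγpos).mpr (by nlinarith [pow_nonneg hγ0 n])
    have hmul : Real.sqrt C * E * (∑ k ∈ range n, γ ^ k)
        ≤ Real.sqrt C * E * (1 - γ)⁻¹ :=
      mul_le_mul_of_nonneg_left hgeom (mul_nonneg (Real.sqrt_nonneg C) hE0)
    have hrw : Real.sqrt C * E * (1 - γ)⁻¹ = Real.sqrt C / (1 - γ) * E := by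
      rw [div_eq_mul_inv]; ring
    linarith [hmul, hrw.le, hrw.ge]
  have hlim : Filter.Tendsto
      (fun n : ℕ => Real.sqrt C / (1 - γ) * E + γ ^ n * Vmax) Filter.atTop
      (nhds (Real.sqrt C / (1 - γ) * E)) := by
    have h1 : Filter.Tendsto (fun n : ℕ => γ ^ n) Filter.atTop (nhds 0) :=
      tendsto_pow_atTop_nhds_zero_of_lt_one hγ0 hγ1
    have h2 := h1.mul_const Vmax
    rw [zero_mul] at h2
    simpa using Filter.Tendsto.add (tendsto_const_nhds
      (x := Real.sqrt C / (1 - γ) * E) (f := Filter.atTop (α := ℕ))) h2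
  have final := ge_of_tendsto' hlim bound
  have hEeq : (∑ s, ∑ a, μ s a *
      (f s a - (R s a + γ * ∑ s', P s a s' * ⨆ a', f s' a')) ^ 2)
      = ∑ s, ∑ a, μ s a * (f s a - Tf s a) ^ 2 :=
    sum_congr rfl fun s _ => sum_congr rfl fun a _ => by rw [hTf s a]
  rw [hEeq]
  exact final
end

section
/- Let g, g*, T f : S×A → [0, V_max] and (s,a,r,s') distributed with (s,a) ~ μ, r = R(s,a), s' ~ P(s,a). Define X := (g(s,a) - r - γV_f(s'))² - (g*(s,a) - r - γV_f(s'))². Then Var(X) ≤ E[X²] ≤ 4 V_max² · ‖g - g*‖²_{2,μ}, provided all quantities g(s,a), g*(s,a), r + γV_f(s') lie in [0, V_max]. -/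
open Finset

/-- Variance bound for the excess-loss random variable
`X = (g(s,a) - r - γV_f(s'))² - (g*(s,a) - r - γV_f(s'))²` where
`(s,a) ~ μ`, `r = R(s,a)`, `s' ~ P(s,a)`:
`Var(X) ≤ E[X²] ≤ 4 V_max² ‖g - g*‖²_{2,μ}`, provided all of
`g(s,a)`, `g*(s,a)` and `r + γV_f(s')` lie in `[0, V_max]`. -/
theorem stmt6 {S A : Type*} [Fintype S] [Fintype A] [Nonempty A]
    (P : S → A → S → ℝ) (R : S → A → ℝ) (μ : S → A → ℝ) (γ Vmax : ℝ)
    (hP0 : ∀ s a s', 0 ≤ P s a s') (hP1 : ∀ s a, ∑ s', P s a s' = 1)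
    (hμ0 : ∀ s a, 0 ≤ μ s a) (hμ1 : ∑ s, ∑ a, μ s a = 1)
    (f g gs : S → A → ℝ)
    (hg : ∀ s a, 0 ≤ g s a ∧ g s a ≤ Vmax)
    (hgs : ∀ s a, 0 ≤ gs s a ∧ gs s a ≤ Vmax)
    -- the regression target r + γ V_f(s') lies in [0, Vmax]
    (hy : ∀ s a s', 0 ≤ R s a + γ * ⨆ a', f s' a'
            ∧ R s a + γ * ⨆ a', f s' a' ≤ Vmax) :
    -- Var(X) ≤ E[X²]
    ((∑ s, ∑ a, μ s a * ∑ s', P s a s' *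
        ((g s a - (R s a + γ * ⨆ a', f s' a')) ^ 2
          - (gs s a - (R s a + γ * ⨆ a', f s' a')) ^ 2) ^ 2)
      - (∑ s, ∑ a, μ s a * ∑ s', P s a s' *
        ((g s a - (R s a + γ * ⨆ a', f s' a')) ^ 2
          - (gs s a - (R s a + γ * ⨆ a', f s' a')) ^ 2)) ^ 2
      ≤ ∑ s, ∑ a, μ s a * ∑ s', P s a s' *
        ((g s a - (R s a + γ * ⨆ a', f s' a')) ^ 2
          - (gs s a - (R s a + γ * ⨆ a', f s' a')) ^ 2) ^ 2)
    ∧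
    -- E[X²] ≤ 4 V_max² ‖g - g*‖²_{2,μ}
    (∑ s, ∑ a, μ s a * ∑ s', P s a s' *
        ((g s a - (R s a + γ * ⨆ a', f s' a')) ^ 2
          - (gs s a - (R s a + γ * ⨆ a', f s' a')) ^ 2) ^ 2
      ≤ 4 * Vmax ^ 2 * ∑ s, ∑ a, μ s a * (g s a - gs s a) ^ 2) := by
  constructor
  · nlinarith [sq_nonneg (∑ s, ∑ a, μ s a * ∑ s', P s a s' *
        ((g s a - (R s a + γ * ⨆ a', f s' a')) ^ 2
          - (gs s a - (R s a + γ * ⨆ a', f s' a')) ^ 2))]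
  · rw [Finset.mul_sum]
    apply Finset.sum_le_sum
    intro s _
    rw [Finset.mul_sum]
    apply Finset.sum_le_sum
    intro a _
    have key : ∑ s', P s a s' *
        ((g s a - (R s a + γ * ⨆ a', f s' a')) ^ 2
          - (gs s a - (R s a + γ * ⨆ a', f s' a')) ^ 2) ^ 2
        ≤ 4 * Vmax ^ 2 * (g s a - gs s a) ^ 2 := by
      calc ∑ s', P s a s' *
            ((g s a - (R s a + γ * ⨆ a', f s' a')) ^ 2
              - (gs s a - (R s a + γ * ⨆ a', f s' a')) ^ 2) ^ 2
          ≤ ∑ s', P s a s' * (4 * Vmax ^ 2 * (g s a - gs s a) ^ 2) := by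
            apply Finset.sum_le_sum
            intro s' _
            apply mul_le_mul_of_nonneg_left _ (hP0 s a s')
            set y := R s a + γ * ⨆ a', f s' a' with hydef
            have h1 := (hg s a).1
            have h2 := (hg s a).2
            have h3 := (hgs s a).1
            have h4 := (hgs s a).2
            have h5 := (hy s a s').1
            have h6 := (hy s a s').2
            have : (g s a - y) ^ 2 - (gs s a - y) ^ 2
                = (g s a + gs s a - 2 * y) * (g s a - gs s a) := by ring
            rw [this, mul_pow]
            have hb : (g s a + gs s a - 2 * y) ^ 2 ≤ 4 * Vmax ^ 2 := by nlinarith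
            nlinarith [sq_nonneg (g s a - gs s a)]
        _ = 4 * Vmax ^ 2 * (g s a - gs s a) ^ 2 := by
            rw [← Finset.sum_mul, hP1 s a, one_mul]
    calc μ s a * ∑ s', P s a s' *
          ((g s a - (R s a + γ * ⨆ a', f s' a')) ^ 2
            - (gs s a - (R s a + γ * ⨆ a', f s' a')) ^ 2) ^ 2
        ≤ μ s a * (4 * Vmax ^ 2 * (g s a - gs s a) ^ 2) :=
          mul_le_mul_of_nonneg_left key (hμ0 s a)
      _ = 4 * Vmax ^ 2 * (μ s a * (g s a - gs s a) ^ 2) := by ring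
end

section
/- In a reactive POMDP with finite hidden state space Z, finite observation space S, and finite action space A, where every admissible observation distribution factors as ν_h^π(s) = Σ_{z∈Z} P(s|z)·ν_h^π(z) with a fixed emission kernel P(·|z), there exists a data distribution μ ∈ Δ(S×A), expressible as μ(s,a) = μ_S(s)/|A| with μ_S a uniform mixture of at most |Z| admissible state distributions, such that every admissible state-action distribution ν satisfies ν(s,a)/μ(s,a) ≤ |Z|·|A| wherever μ(s,a) > 0. -/
open Finset

/-- In a reactive POMDP with finite hidden state space `Z`,
finite observation space `S` and finite action space `A`, where every
admissible observation distribution `νS i` factors through the fixed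
emission kernel `E` as `νS i (s) = Σ_z w i z · E z s` (with `w i` the hidden
state distribution), there is a data distribution
`μ(s,a) = μ_S(s)·(1/|A|)`, with `μ_S` a uniform mixture of `r ≤ |Z|`
admissible state distributions, such that every admissible state-action
distribution `ν(s,a) = νS i (s)·π(a|s)` satisfies
`ν(s,a)/μ(s,a) ≤ |Z|·|A|` wherever `μ(s,a) > 0`. The index type `ι`
enumerates the (finitely many) admissible state distributions. -/
theorem stmt13 {Z S A ι : Type*}
    [Fintype Z] [Fintype S] [Fintype A] [Fintype ι] [Nonempty ι] [Nonempty A]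
    (E : Z → S → ℝ)
    (hE0 : ∀ z s, 0 ≤ E z s) (hE1 : ∀ z, ∑ s, E z s = 1)
    (νS : ι → S → ℝ) (w : ι → Z → ℝ)
    (hw0 : ∀ i z, 0 ≤ w i z) (hw1 : ∀ i, ∑ z, w i z = 1)
    (hfac : ∀ i s, νS i s = ∑ z, w i z * E z s) :
    ∃ (r : ℕ), 1 ≤ r ∧ r ≤ Fintype.card Z ∧
      ∃ σ : Fin r → ι,
        ∀ (i : ι) (π : S → A → ℝ),
          (∀ s a, 0 ≤ π s a) → (∀ s, ∑ a, π s a = 1) →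
          ∀ s a,
            0 < ((1 / (r : ℝ)) * ∑ j, νS (σ j) s) * (1 / (Fintype.card A : ℝ)) →
            (νS i s * π s a) /
                (((1 / (r : ℝ)) * ∑ j, νS (σ j) s) * (1 / (Fintype.card A : ℝ)))
              ≤ (Fintype.card Z : ℝ) * (Fintype.card A : ℝ) := by

  have hZ : Nonempty Z := by
    rcases isEmpty_or_nonempty Z with h | h
    · exact absurd (hw1 (Classical.arbitrary ι)) (by simp)
    · exact h
  have hgex : ∀ z : Z, ∃ i : ι, ∀ i', w i' z ≤ w i z := by
    intro z
    obtain ⟨i, -, hi⟩ := Finset.exists_max_image Finset.univ (fun i => w i z)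
      ⟨Classical.arbitrary ι, mem_univ _⟩
    exact ⟨i, fun i' => hi i' (mem_univ _)⟩
  choose g hgmax using hgex
  refine ⟨Fintype.card Z, Fintype.card_pos, le_refl _,
    fun j => g ((Fintype.equivFin Z).symm j), ?_⟩
  intro i π hπ0 hπ1 s a hμ
  have hν0 : ∀ (i' : ι) (s' : S), 0 ≤ νS i' s' := by
    intro i' s'
    rw [hfac]
    exact Finset.sum_nonneg fun z _ => mul_nonneg (hw0 _ _) (hE0 _ _)
  have hTz : (∑ j, νS (g ((Fintype.equivFin Z).symm j)) s) = ∑ z, νS (g z) s :=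
    Fintype.sum_equiv (Fintype.equivFin Z).symm _ _ (fun j => rfl)
  have hkey : νS i s ≤ ∑ j, νS (g ((Fintype.equivFin Z).symm j)) s := by
    rw [hTz, hfac]
    refine Finset.sum_le_sum fun z _ => ?_
    calc w i z * E z s ≤ w (g z) z * E z s :=
          mul_le_mul_of_nonneg_right (hgmax z i) (hE0 z s)
      _ ≤ ∑ z', w (g z) z' * E z' s :=
          Finset.single_le_sum (f := fun z' => w (g z) z' * E z' s)
            (fun z' _ => mul_nonneg (hw0 _ _) (hE0 _ _)) (mem_univ z)
      _ = νS (g z) s := (hfac _ _).symm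
  have hπle : π s a ≤ 1 := by
    calc π s a ≤ ∑ a', π s a' :=
          Finset.single_le_sum (fun a' _ => hπ0 s a') (mem_univ a)
      _ = 1 := hπ1 s
  rw [div_le_iff₀ hμ]
  have hcZ : (0 : ℝ) < (Fintype.card Z : ℝ) := by
    exact_mod_cast Fintype.card_pos
  have hcA : (0 : ℝ) < (Fintype.card A : ℝ) := by
    exact_mod_cast Fintype.card_pos
  have heq : (Fintype.card Z : ℝ) * (Fintype.card A : ℝ) *
      (((1 / ((Fintype.card Z : ℕ) : ℝ)) * ∑ j, νS (g ((Fintype.equivFin Z).symm j)) s) *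
        (1 / (Fintype.card A : ℝ)))
      = ∑ j, νS (g ((Fintype.equivFin Z).symm j)) s := by
    field_simp
  rw [heq]
  calc νS i s * π s a ≤ νS i s * 1 := mul_le_mul_of_nonneg_left hπle (hν0 i s)
    _ = νS i s := mul_one _
    _ ≤ _ := hkey
end

section
/- Let φ : S → S_φ be a state abstraction of the finite MDP M, and let F^φ be the class of functions f : S×A → [0, V_max] that are piece-wise constant under φ (i.e., φ(s₁)=φ(s₂) implies f(s₁,a)=f(s₂,a) for all a). If φ is a bisimulation — meaning φ(s₁)=φ(s₂) implies R(s₁,a)=R(s₂,a) and Σ_{s∈φ⁻¹(x)} P(s|s₁,a) = Σ_{s∈φ⁻¹(x)} P(s|s₂,a) for all a ∈ A and x ∈ S_φ — then F^φ is closed under the Bellman optimality operator: for every f ∈ F^φ, Tf ∈ F^φ. -/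
open Finset

/-- If `φ : S → S_φ` is a bisimulation (aggregated states
share rewards and aggregated transition probabilities), then the class
`F^φ` of `[0,V_max]`-valued functions that are piece-wise constant under
`φ` is closed under the Bellman optimality operator: for every `f ∈ F^φ`,
`Tf` is piece-wise constant under `φ` and takes values in `[0, V_max]`. -/
theorem stmt14 {S Sφ A : Type*}
    [Fintype S] [Fintype Sφ] [Fintype A] [Nonempty A] [DecidableEq Sφ]
    (φ : S → Sφ) (P : S → A → S → ℝ) (R : S → A → ℝ) (γ Rmax Vmax : ℝ)
    (hγ0 : 0 ≤ γ) (hγ1 : γ < 1) (hV : Vmax = Rmax / (1 - γ))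
    (hP0 : ∀ s a s', 0 ≤ P s a s') (hP1 : ∀ s a, ∑ s', P s a s' = 1)
    (hR : ∀ s a, 0 ≤ R s a ∧ R s a ≤ Rmax)
    -- bisimulation: equal rewards on aggregated states
    (hbisimR : ∀ s₁ s₂ a, φ s₁ = φ s₂ → R s₁ a = R s₂ a)
    -- bisimulation: equal aggregated transition probabilities
    (hbisimP : ∀ s₁ s₂ a x, φ s₁ = φ s₂ →
      (∑ s', if φ s' = x then P s₁ a s' else 0)
        = (∑ s', if φ s' = x then P s₂ a s' else 0))
    (f : S → A → ℝ)
    -- f ∈ F^φ: piece-wise constant under φ with values in [0, Vmax]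
    (hfpc : ∀ s₁ s₂ a, φ s₁ = φ s₂ → f s₁ a = f s₂ a)
    (hfbd : ∀ s a, 0 ≤ f s a ∧ f s a ≤ Vmax) :
    -- T f ∈ F^φ
    (∀ s₁ s₂ a, φ s₁ = φ s₂ →
      R s₁ a + γ * ∑ s', P s₁ a s' * ⨆ a', f s' a'
        = R s₂ a + γ * ∑ s', P s₂ a s' * ⨆ a', f s' a')
    ∧ (∀ s a, 0 ≤ R s a + γ * ∑ s', P s a s' * ⨆ a', f s' a'
        ∧ R s a + γ * ∑ s', P s a s' * ⨆ a', f s' a' ≤ Vmax) := by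

  classical
  set g : S → ℝ := fun s => ⨆ a', f s a' with hg
  have hbdd : ∀ s, BddAbove (Set.range (f s)) := fun s => (Set.finite_range _).bddAbove
  have hg0 : ∀ s, 0 ≤ g s := by
    intro s
    obtain ⟨a₀⟩ := (inferInstance : Nonempty A)
    exact le_trans (hfbd s a₀).1 (le_ciSup (hbdd s) a₀)
  have hgV : ∀ s, g s ≤ Vmax := fun s => ciSup_le fun a => (hfbd s a).2
  have hgc : ∀ s₁ s₂, φ s₁ = φ s₂ → g s₁ = g s₂ := by
    intro s₁ s₂ h
    exact iSup_congr fun a => hfpc s₁ s₂ a h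
  have split : ∀ s a, ∑ s', P s a s' * g s'
      = ∑ x, ∑ s', if φ s' = x then P s a s' * g s' else 0 := by
    intro s a
    rw [Finset.sum_comm]
    simp
  have key : ∀ s₁ s₂ a, φ s₁ = φ s₂ →
      ∑ s', P s₁ a s' * g s' = ∑ s', P s₂ a s' * g s' := by
    intro s₁ s₂ a h
    rw [split, split]
    refine Finset.sum_congr rfl fun x _ => ?_
    by_cases hx : ∃ s₀, φ s₀ = x
    · obtain ⟨s₀, hs₀⟩ := hx
      have hfac : ∀ s, ∑ s', (if φ s' = x then P s a s' * g s' else 0)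
          = (∑ s', if φ s' = x then P s a s' else 0) * g s₀ := by
        intro s
        rw [Finset.sum_mul]
        refine Finset.sum_congr rfl fun s' _ => ?_
        by_cases h' : φ s' = x
        · simp [h', hgc s' s₀ (h'.trans hs₀.symm)]
        · simp [h']
      rw [hfac, hfac, hbisimP s₁ s₂ a x h]
    · push_neg at hx
      simp [hx]
  constructor
  · intro s₁ s₂ a h
    rw [hbisimR s₁ s₂ a h, key s₁ s₂ a h]
  · intro s a
    have hsum0 : 0 ≤ ∑ s', P s a s' * g s' :=
      Finset.sum_nonneg fun s' _ => mul_nonneg (hP0 s a s') (hg0 s')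
    have hsumV : ∑ s', P s a s' * g s' ≤ Vmax := by
      calc ∑ s', P s a s' * g s' ≤ ∑ s', P s a s' * Vmax :=
            Finset.sum_le_sum fun s' _ => mul_le_mul_of_nonneg_left (hgV s') (hP0 s a s')
        _ = Vmax := by rw [← Finset.sum_mul, hP1 s a, one_mul]
    have hRm : Rmax = (1 - γ) * Vmax := by
      rw [hV, mul_comm, div_mul_cancel₀ _ (by linarith : (1:ℝ) - γ ≠ 0)]
    constructor
    · have := (hR s a).1
      nlinarith
    · have := (hR s a).2
      nlinarith
end

section
/- Let φ : S → S_φ be a state abstraction and F^φ the class of [0,V_max]-valued functions piece-wise constant under φ. Suppose φ is an (ε_R, ε_P)-approximate bisimulation: max over aggregated pairs s₁,s₂ (φ(s₁)=φ(s₂)) and actions a of |R(s₁,a) − R(s₂,a)| equals ε_R, and of ‖ΦP(s₁,a) − ΦP(s₂,a)‖₁ equals ε_P, where Φ aggregates transition probabilities into abstract states. Then sup_{f∈F^φ} inf_{f'∈F^φ} ‖f' − Tf‖_∞ ≤ ε_R/2 + γ·ε_P·V_max/4. -/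
open Finset

/-- If `φ` is an `(ε_R, ε_P)`-approximate bisimulation,
then the inherent Bellman error of the piece-wise constant class `F^φ` is
upper bounded: for every `f ∈ F^φ` there exists `f' ∈ F^φ` with
`‖f' − Tf‖_∞ ≤ ε_R/2 + γ·ε_P·V_max/4`; that is,
`sup_{f∈F^φ} inf_{f'∈F^φ} ‖f' − Tf‖_∞ ≤ ε_R/2 + γ·ε_P·V_max/4`. -/
theorem stmt15 {S Sφ A : Type*}
    [Fintype S] [Fintype Sφ] [Fintype A] [Nonempty S] [Nonempty A]
    [DecidableEq Sφ]
    (φ : S → Sφ) (P : S → A → S → ℝ) (R : S → A → ℝ) (γ Rmax Vmax εR εP : ℝ)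
    (hγ0 : 0 ≤ γ) (hγ1 : γ < 1) (hV : Vmax = Rmax / (1 - γ))
    (hP0 : ∀ s a s', 0 ≤ P s a s') (hP1 : ∀ s a, ∑ s', P s a s' = 1)
    (hR : ∀ s a, 0 ≤ R s a ∧ R s a ≤ Rmax)
    -- (ε_R, ε_P)-approximate bisimulation
    (hεR : ∀ s₁ s₂ a, φ s₁ = φ s₂ → |R s₁ a - R s₂ a| ≤ εR)
    (hεP : ∀ s₁ s₂ a, φ s₁ = φ s₂ →
      (∑ x, |(∑ s', if φ s' = x then P s₁ a s' else 0)
        - (∑ s', if φ s' = x then P s₂ a s' else 0)|) ≤ εP) :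
    ∀ f : S → A → ℝ,
      ((∀ s₁ s₂ a, φ s₁ = φ s₂ → f s₁ a = f s₂ a)
        ∧ ∀ s a, 0 ≤ f s a ∧ f s a ≤ Vmax) →
      ∃ f' : S → A → ℝ,
        ((∀ s₁ s₂ a, φ s₁ = φ s₂ → f' s₁ a = f' s₂ a)
          ∧ ∀ s a, 0 ≤ f' s a ∧ f' s a ≤ Vmax)
        ∧ (⨆ p : S × A, |f' p.1 p.2
              - (R p.1 p.2 + γ * ∑ s', P p.1 p.2 s' * ⨆ a', f s' a')|)
            ≤ εR / 2 + γ * εP * Vmax / 4 := by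
  classical
  rintro f ⟨hfc, hfb⟩
  obtain ⟨s₀⟩ := ‹Nonempty S›
  obtain ⟨a₀⟩ := ‹Nonempty A›
  have hRmax0 : 0 ≤ Rmax := le_trans (hR s₀ a₀).1 (hR s₀ a₀).2
  have h1γ : 0 < 1 - γ := by linarith
  have hVmax0 : 0 ≤ Vmax := hV ▸ div_nonneg hRmax0 h1γ.le
  have hRV : Rmax + γ * Vmax = Vmax := by
    rw [hV]; field_simp; ring
  set V : S → ℝ := fun s => ⨆ a', f s a' with hVdef
  have hbdd : ∀ s, BddAbove (Set.range (f s)) := fun s => (Set.finite_range _).bddAbove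
  have hV0 : ∀ s, 0 ≤ V s := fun s => le_trans (hfb s a₀).1 (le_ciSup (hbdd s) a₀)
  have hVle : ∀ s, V s ≤ Vmax := fun s => ciSup_le fun a => (hfb s a).2
  have hVconst : ∀ s₁ s₂, φ s₁ = φ s₂ → V s₁ = V s₂ := by
    intro s₁ s₂ h
    simp only [hVdef]
    exact congrArg iSup (funext fun a => hfc s₁ s₂ a h)
  set W : Sφ → ℝ := fun x => if h : ∃ s, φ s = x then V h.choose else 0 with hWdef
  have hWφ : ∀ s, W (φ s) = V s := by
    intro s
    have h : ∃ t, φ t = φ s := ⟨s, rfl⟩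
    simp only [hWdef, dif_pos h]
    exact hVconst _ _ h.choose_spec
  have hWbd : ∀ x, |W x - Vmax / 2| ≤ Vmax / 2 := by
    intro x
    by_cases h : ∃ s, φ s = x
    · simp only [hWdef, dif_pos h]
      have h1 := hV0 h.choose
      have h2 := hVle h.choose
      rw [abs_le]; constructor <;> linarith
    · simp only [hWdef, dif_neg h]
      rw [abs_le]; constructor <;> linarith
  set g : S → A → ℝ := fun s a => R s a + γ * ∑ s', P s a s' * V s' with hg
  have hg0 : ∀ s a, 0 ≤ g s a := by
    intro s a
    have : 0 ≤ ∑ s', P s a s' * V s' :=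
      Finset.sum_nonneg fun s' _ => mul_nonneg (hP0 s a s') (hV0 s')
    have := mul_nonneg hγ0 this
    have := (hR s a).1
    simp only [hg]
    linarith
  have hgV : ∀ s a, g s a ≤ Vmax := by
    intro s a
    have h1 : ∑ s', P s a s' * V s' ≤ Vmax := by
      calc ∑ s', P s a s' * V s' ≤ ∑ s', P s a s' * Vmax :=
            Finset.sum_le_sum fun s' _ => mul_le_mul_of_nonneg_left (hVle s') (hP0 s a s')
        _ = Vmax := by rw [← Finset.sum_mul, hP1, one_mul]
    calc g s a ≤ Rmax + γ * Vmax :=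
          add_le_add (hR s a).2 (mul_le_mul_of_nonneg_left h1 hγ0)
      _ = Vmax := hRV
  have hosc : ∀ s₁ s₂ a, φ s₁ = φ s₂ →
      |g s₁ a - g s₂ a| ≤ εR + γ * (εP * (Vmax / 2)) := by
    intro s₁ s₂ a h
    set Q : S → Sφ → ℝ := fun s x => ∑ s', if φ s' = x then P s a s' else 0 with hQ
    have hsumQ : ∀ s : S, ∑ x, Q s x = 1 := by
      intro s
      simp only [hQ]
      rw [Finset.sum_comm]
      calc ∑ s', ∑ x, (if φ s' = x then P s a s' else 0)
          = ∑ s', P s a s' := by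
            apply Finset.sum_congr rfl; intro s' _
            simp [Finset.sum_ite_eq]
        _ = 1 := hP1 s a
    have hPV : ∀ s : S, ∑ s', P s a s' * V s' = ∑ x, Q s x * W x := by
      intro s
      rw [eq_comm]
      calc ∑ x, Q s x * W x
          = ∑ x, ∑ s', (if φ s' = x then P s a s' * W x else 0) := by
            apply Finset.sum_congr rfl; intro x _
            rw [hQ]
            simp only [Finset.sum_mul]
            apply Finset.sum_congr rfl; intro s' _
            split <;> simp
        _ = ∑ s', ∑ x, (if φ s' = x then P s a s' * W x else 0) := Finset.sum_comm
        _ = ∑ s', P s a s' * W (φ s') := by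
            apply Finset.sum_congr rfl; intro s' _
            simp [Finset.sum_ite_eq]
        _ = ∑ s', P s a s' * V s' := by
            apply Finset.sum_congr rfl; intro s' _
            rw [hWφ]
    have key : ∑ s', P s₁ a s' * V s' - ∑ s', P s₂ a s' * V s'
        = ∑ x, (Q s₁ x - Q s₂ x) * (W x - Vmax / 2) := by
      rw [hPV, hPV]
      have e : ∀ x : Sφ, (Q s₁ x - Q s₂ x) * (W x - Vmax / 2)
          = (Q s₁ x * W x - Q s₂ x * W x) - ((Vmax / 2) * Q s₁ x - (Vmax / 2) * Q s₂ x) := by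
        intro x; ring
      simp only [e, Finset.sum_sub_distrib, ← Finset.mul_sum, hsumQ]
      ring
    have habs : |∑ x, (Q s₁ x - Q s₂ x) * (W x - Vmax / 2)| ≤ εP * (Vmax / 2) := by
      calc |∑ x, (Q s₁ x - Q s₂ x) * (W x - Vmax / 2)|
          ≤ ∑ x, |(Q s₁ x - Q s₂ x) * (W x - Vmax / 2)| := Finset.abs_sum_le_sum_abs _ _
        _ ≤ ∑ x, |Q s₁ x - Q s₂ x| * (Vmax / 2) := by
            apply Finset.sum_le_sum; intro x _
            rw [abs_mul]
            exact mul_le_mul_of_nonneg_left (hWbd x) (abs_nonneg _)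
        _ = (∑ x, |Q s₁ x - Q s₂ x|) * (Vmax / 2) := (Finset.sum_mul _ _ _).symm
        _ ≤ εP * (Vmax / 2) := by
            apply mul_le_mul_of_nonneg_right (hεP s₁ s₂ a h) (by linarith)
    have hsplit : g s₁ a - g s₂ a
        = (R s₁ a - R s₂ a)
          + γ * (∑ s', P s₁ a s' * V s' - ∑ s', P s₂ a s' * V s') := by
      simp only [hg]; ring
    rw [hsplit]
    calc |(R s₁ a - R s₂ a) + γ * (∑ s', P s₁ a s' * V s' - ∑ s', P s₂ a s' * V s')|
        ≤ |R s₁ a - R s₂ a| + |γ * (∑ s', P s₁ a s' * V s' - ∑ s', P s₂ a s' * V s')| :=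
          abs_add_le _ _
      _ ≤ εR + γ * (εP * (Vmax / 2)) := by
          apply add_le_add (hεR s₁ s₂ a h)
          rw [abs_mul, abs_of_nonneg hγ0, key]
          exact mul_le_mul_of_nonneg_left habs hγ0
  set C : S → Finset S := fun s => univ.filter (fun t => φ t = φ s) with hC
  have hCne : ∀ s, (C s).Nonempty := fun s => ⟨s, by simp [hC]⟩
  have hCmem : ∀ s t, t ∈ C s → φ t = φ s := by
    intro s t ht
    simpa [hC] using ht
  set f' : S → A → ℝ := fun s a =>
    ((C s).sup' (hCne s) (fun t => g t a) + (C s).inf' (hCne s) (fun t => g t a)) / 2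
    with hf'
  have hmid : ∀ s a, |f' s a - g s a| ≤ (εR + γ * (εP * (Vmax / 2))) / 2 := by
    intro s a
    obtain ⟨t₁, ht₁, hM⟩ := Finset.exists_mem_eq_sup' (hCne s) (fun t => g t a)
    obtain ⟨t₂, ht₂, hm⟩ := Finset.exists_mem_eq_inf' (hCne s) (fun t => g t a)
    have hsmem : s ∈ C s := by simp [hC]
    have hle1 : g s a ≤ (C s).sup' (hCne s) (fun t => g t a) := by exact Finset.le_sup' (fun t => g t a) hsmem
    have hle2 : (C s).inf' (hCne s) (fun t => g t a) ≤ g s a := Finset.inf'_le _ hsmem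
    have hMm : g t₁ a - g t₂ a ≤ εR + γ * (εP * (Vmax / 2)) :=
      le_trans (le_abs_self _)
        (hosc t₁ t₂ a ((hCmem s t₁ ht₁).trans (hCmem s t₂ ht₂).symm))
    rw [hM] at hle1
    rw [hm] at hle2
    simp only [hf', hM, hm]
    clear_value f' C g W V
    rw [abs_le]
    constructor <;> linarith
  have hf'bd : ∀ s a, 0 ≤ f' s a ∧ f' s a ≤ Vmax := by
    intro s a
    obtain ⟨t₁, ht₁, hM⟩ := Finset.exists_mem_eq_sup' (hCne s) (fun t => g t a)
    obtain ⟨t₂, ht₂, hm⟩ := Finset.exists_mem_eq_inf' (hCne s) (fun t => g t a)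
    have h1 := hg0 t₂ a
    have h2 := hgV t₁ a
    have h3 : (C s).inf' (hCne s) (fun t => g t a) ≤ (C s).sup' (hCne s) (fun t => g t a) :=
      le_trans (Finset.inf'_le _ ht₁) (by exact Finset.le_sup' (fun t => g t a) ht₁)
    have h3' : g t₂ a ≤ g t₁ a := by rw [← hM, ← hm]; exact h3
    constructor <;> simp only [hf', hM, hm] <;> clear_value f' C g W V <;> linarith
  refine ⟨f', ⟨?_, hf'bd⟩, ?_⟩
  · intro s₁ s₂ a h
    have hCC : C s₁ = C s₂ := by
      simp only [hC, h]
    simp only [hf', hCC]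
  · apply ciSup_le
    rintro ⟨s, a⟩
    have h1 := hmid s a
    have h2 : (εR + γ * (εP * (Vmax / 2))) / 2 = εR / 2 + γ * εP * Vmax / 4 := by ring
    rw [h2] at h1
    exact h1
end

section
/- With the same setup (φ an (ε_R, ε_P)-approximate bisimulation and F^φ the piece-wise constant class), the inherent Bellman error is lower bounded: sup_{f∈F^φ} inf_{f'∈F^φ} ‖f' − Tf‖_∞ ≥ max{ε_R/2, γ·ε_P·V_max/4}. In particular the lower bound ε_R/2 is witnessed by f = 0 (so Tf = R), and the lower bound γ·ε_P·V_max/4 is witnessed by a {0, V_max}-valued piece-wise constant function whose lifted value function realizes the total-variation distance between the two aggregated transition distributions. -/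
open Finset

private lemma half_le_ciSup' {ι : Type*} [Fintype ι] [Nonempty ι] (h : ι → ℝ) (p q : ι) (c : ℝ)
    (hc : c ≤ h p + h q) : c / 2 ≤ ⨆ i, h i := by
  have hp := le_ciSup (Set.Finite.bddAbove (Set.finite_range h)) p
  have hq := le_ciSup (Set.Finite.bddAbove (Set.finite_range h)) q
  linarith

private lemma aux2 {S Sφ A : Type*} [Fintype S] [Fintype Sφ] [Fintype A]
    [Nonempty S] [Nonempty A] [DecidableEq Sφ]
    (φ : S → Sφ) (P : S → A → S → ℝ) (R : S → A → ℝ) (γ Vmax εP : ℝ)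
    (hγ0 : 0 ≤ γ) (hV0 : 0 ≤ Vmax)
    (hP1 : ∀ s a, ∑ s', P s a s' = 1)
    (s₁ s₂ : S) (a : A) (hφ : φ s₁ = φ s₂)
    (hRord : R s₂ a ≤ R s₁ a)
    (hsum : (∑ x, |(∑ s', if φ s' = x then P s₁ a s' else 0)
        - (∑ s', if φ s' = x then P s₂ a s' else 0)|) = εP) :
    (∃ f : S → A → ℝ,
      ((∀ t₁ t₂ b, φ t₁ = φ t₂ → f t₁ b = f t₂ b)
        ∧ ∀ s b, 0 ≤ f s b ∧ f s b ≤ Vmax)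
      ∧ ∀ f' : S → A → ℝ,
          ((∀ t₁ t₂ b, φ t₁ = φ t₂ → f' t₁ b = f' t₂ b)
            ∧ ∀ s b, 0 ≤ f' s b ∧ f' s b ≤ Vmax) →
          γ * εP * Vmax / 4 ≤ ⨆ p : S × A, |f' p.1 p.2
            - (R p.1 p.2 + γ * ∑ s', P p.1 p.2 s' * ⨆ a', f s' a')|) := by
  classical
  set Q : S → Sφ → ℝ := fun s x => ∑ s', if φ s' = x then P s a s' else 0 with hQ
  set g : Sφ → ℝ := fun x => if Q s₂ x < Q s₁ x then Vmax else 0 with hg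
  refine ⟨fun s _ => g (φ s), ⟨fun t₁ t₂ b h => by show g (φ t₁) = g (φ t₂); rw [h], fun s b => ?_⟩, ?_⟩
  · simp only [hg]
    split_ifs <;> constructor <;> simp [hV0]
  have hεP0 : 0 ≤ εP := by
    rw [← hsum]; exact Finset.sum_nonneg fun x _ => abs_nonneg _
  have hQg : ∀ s : S, ∑ s', P s a s' * g (φ s') = ∑ x, Q s x * g x := by
    intro s
    simp only [hQ, sum_mul, ite_mul, zero_mul]
    rw [Finset.sum_comm]
    simp [Finset.sum_ite_eq]
  have hQsum : ∀ s : S, ∑ x, Q s x = 1 := by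
    intro s
    simp only [hQ]
    rw [Finset.sum_comm]
    simp [Finset.sum_ite_eq, hP1]
  have hpt : ∀ x, (Q s₁ x - Q s₂ x) * g x
      = Vmax * ((Q s₁ x - Q s₂ x) + |Q s₁ x - Q s₂ x|) / 2 := by
    intro x
    simp only [hg]
    split_ifs with h
    · rw [abs_of_pos (by linarith)]; ring
    · rw [abs_of_nonpos (by linarith)]; ring
  have hD : ∑ x, (Q s₁ x - Q s₂ x) * g x = Vmax * εP / 2 := by
    calc ∑ x, (Q s₁ x - Q s₂ x) * g x
        = ∑ x, Vmax * ((Q s₁ x - Q s₂ x) + |Q s₁ x - Q s₂ x|) / 2 :=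
          Finset.sum_congr rfl fun x _ => hpt x
      _ = Vmax * ((∑ x, (Q s₁ x - Q s₂ x)) + ∑ x, |Q s₁ x - Q s₂ x|) / 2 := by
          rw [← Finset.sum_div, ← Finset.mul_sum, ← Finset.sum_add_distrib]
      _ = Vmax * εP / 2 := by
          rw [Finset.sum_sub_distrib, hQsum, hQsum, hsum]; ring
  intro f' hf'
  set T : S → ℝ := fun s => R s a + γ * ∑ s', P s a s' * ⨆ _ : A, g (φ s') with hT
  have hTdiff : T s₁ - T s₂ = (R s₁ a - R s₂ a) + γ * (Vmax * εP / 2) := by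
    simp only [hT, ciSup_const]
    rw [hQg s₁, hQg s₂, ← hD]
    simp only [sub_mul]
    rw [Finset.sum_sub_distrib]
    ring
  have hgap : γ * εP * Vmax / 2 ≤ T s₁ - T s₂ := by
    rw [hTdiff]
    linarith [hRord, (by ring : γ * (Vmax * εP / 2) = γ * εP * Vmax / 2)]
  have h12 : f' s₁ a = f' s₂ a := hf'.1 s₁ s₂ a hφ
  have key : γ * εP * Vmax / 2 ≤ |f' s₁ a - T s₁| + |f' s₂ a - T s₂| := by
    have h1 : |T s₁ - T s₂| ≤ |T s₁ - f' s₁ a| + |f' s₂ a - T s₂| := by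
      rw [← h12]; exact abs_sub_le (T s₁) (f' s₁ a) (T s₂)
    rw [abs_sub_comm (T s₁) (f' s₁ a)] at h1
    exact hgap.trans ((le_abs_self _).trans h1)
  have hfin := half_le_ciSup'
    (fun p : S × A => |f' p.1 p.2
      - (R p.1 p.2 + γ * ∑ s', P p.1 p.2 s' * ⨆ _ : A, g (φ s'))|)
    (s₁, a) (s₂, a) (γ * εP * Vmax / 2) (by simpa [hT] using key)
  calc γ * εP * Vmax / 4 = (γ * εP * Vmax / 2) / 2 := by ring
    _ ≤ _ := hfin

/-- If `φ` is an `(ε_R, ε_P)`-approximate bisimulation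
(with the maxima attained), then the inherent Bellman error of the
piece-wise constant class `F^φ` is lower bounded by
`max{ε_R/2, γ·ε_P·V_max/4}`: there is a witness `f ∈ F^φ` (namely `f = 0`,
so `Tf = R`) for the bound `ε_R/2`, and a `{0,V_max}`-valued witness
`f ∈ F^φ` for the bound `γ·ε_P·V_max/4`. -/
theorem stmt16 {S Sφ A : Type*}
    [Fintype S] [Fintype Sφ] [Fintype A] [Nonempty S] [Nonempty A]
    [DecidableEq Sφ]
    (φ : S → Sφ) (P : S → A → S → ℝ) (R : S → A → ℝ) (γ Rmax Vmax εR εP : ℝ)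
    (hγ0 : 0 ≤ γ) (hγ1 : γ < 1) (hRmax : 0 ≤ Rmax) (hV : Vmax = Rmax / (1 - γ))
    (hP0 : ∀ s a s', 0 ≤ P s a s') (hP1 : ∀ s a, ∑ s', P s a s' = 1)
    (hR : ∀ s a, 0 ≤ R s a ∧ R s a ≤ Rmax)
    -- ε_R is the max reward discrepancy over aggregated pairs (attained)
    (hεR : ∀ s₁ s₂ a, φ s₁ = φ s₂ → |R s₁ a - R s₂ a| ≤ εR)
    (hεRwit : ∃ s₁ s₂ a, φ s₁ = φ s₂ ∧ |R s₁ a - R s₂ a| = εR)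
    -- ε_P is the max ℓ₁ aggregated-transition discrepancy (attained)
    (hεP : ∀ s₁ s₂ a, φ s₁ = φ s₂ →
      (∑ x, |(∑ s', if φ s' = x then P s₁ a s' else 0)
        - (∑ s', if φ s' = x then P s₂ a s' else 0)|) ≤ εP)
    (hεPwit : ∃ s₁ s₂ a, φ s₁ = φ s₂ ∧
      (∑ x, |(∑ s', if φ s' = x then P s₁ a s' else 0)
        - (∑ s', if φ s' = x then P s₂ a s' else 0)|) = εP) :
    -- lower bound ε_R/2, witnessed by some f ∈ F^φ
    (∃ f : S → A → ℝ,
      ((∀ s₁ s₂ a, φ s₁ = φ s₂ → f s₁ a = f s₂ a)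
        ∧ ∀ s a, 0 ≤ f s a ∧ f s a ≤ Vmax)
      ∧ ∀ f' : S → A → ℝ,
          ((∀ s₁ s₂ a, φ s₁ = φ s₂ → f' s₁ a = f' s₂ a)
            ∧ ∀ s a, 0 ≤ f' s a ∧ f' s a ≤ Vmax) →
          εR / 2 ≤ ⨆ p : S × A, |f' p.1 p.2
            - (R p.1 p.2 + γ * ∑ s', P p.1 p.2 s' * ⨆ a', f s' a')|)
    ∧
    -- lower bound γ·ε_P·V_max/4, witnessed by some f ∈ F^φ
    (∃ f : S → A → ℝ,
      ((∀ s₁ s₂ a, φ s₁ = φ s₂ → f s₁ a = f s₂ a)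
        ∧ ∀ s a, 0 ≤ f s a ∧ f s a ≤ Vmax)
      ∧ ∀ f' : S → A → ℝ,
          ((∀ s₁ s₂ a, φ s₁ = φ s₂ → f' s₁ a = f' s₂ a)
            ∧ ∀ s a, 0 ≤ f' s a ∧ f' s a ≤ Vmax) →
          γ * εP * Vmax / 4 ≤ ⨆ p : S × A, |f' p.1 p.2
            - (R p.1 p.2 + γ * ∑ s', P p.1 p.2 s' * ⨆ a', f s' a')|) := by
  have hV0 : 0 ≤ Vmax := hV ▸ div_nonneg hRmax (by linarith)
  constructor
  · refine ⟨fun _ _ => 0, ⟨fun _ _ _ _ => rfl, fun s b => ⟨le_refl 0, hV0⟩⟩, ?_⟩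
    intro f' hf'
    obtain ⟨s₁, s₂, a, hφ, hwit⟩ := hεRwit
    have h12 : f' s₁ a = f' s₂ a := hf'.1 s₁ s₂ a hφ
    have key : εR ≤ |f' s₁ a - R s₁ a| + |f' s₂ a - R s₂ a| := by
      rw [← hwit]
      calc |R s₁ a - R s₂ a| = |(R s₁ a - f' s₁ a) + (f' s₂ a - R s₂ a)| := by
            rw [h12]; congr 1; ring
        _ ≤ |R s₁ a - f' s₁ a| + |f' s₂ a - R s₂ a| := abs_add_le _ _
        _ = |f' s₁ a - R s₁ a| + |f' s₂ a - R s₂ a| := by rw [abs_sub_comm]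
    simp only [ciSup_const, mul_zero, Finset.sum_const_zero, add_zero]
    exact half_le_ciSup' (fun p : S × A => |f' p.1 p.2 - R p.1 p.2|) (s₁, a) (s₂, a) εR key
  · obtain ⟨s₁, s₂, a, hφ, hwit⟩ := hεPwit
    rcases le_total (R s₂ a) (R s₁ a) with h | h
    · exact aux2 φ P R γ Vmax εP hγ0 hV0 hP1 s₁ s₂ a hφ h hwit
    · exact aux2 φ P R γ Vmax εP hγ0 hV0 hP1 s₂ s₁ a hφ.symm h
        (by rw [← hwit]; exact Finset.sum_congr rfl fun x _ => abs_sub_comm _ _)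
end

section
/- Model-based RL with a state abstraction φ is exactly Fitted Q-Iteration with the piece-wise constant class F^φ: if one estimates the abstract model M̂_φ with R̂_φ(x,a) = (1/|D_{x,a}|)Σ_{(r,s')∈D_{x,a}} r and P̂_φ(x'|x,a) = (1/|D_{x,a}|)Σ_{(r,s')∈D_{x,a}} 1[φ(s')=x'], and runs value iteration g_t = T_{M̂_φ} g_{t−1}, then the lifted iterates [g_t]_M coincide for all t with the FQI iterates f_t := argmin_{f∈F^φ}(1/|D|)Σ_{(s,a,r,s')∈D}(f(s,a) − r − γ·max_{a'} f_{t−1}(s',a'))², provided f_0 = [g_0]_M. -/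
open Finset

/-- Model-based RL with a state abstraction `φ` is exactly
FQI with the piece-wise constant class `F^φ`: if the abstract model
`(R̂_φ, P̂_φ)` is the certainty-equivalent estimate from the dataset `D`
(cell-wise empirical averages), `g_t` are the value-iteration iterates in
the abstract model, and `f_t` are the FQI iterates over the piece-wise
constant class with `f_0 = [g_0]_M`, then `f_t = [g_t]_M` for all `t`. -/
theorem stmt17 {S Sφ A : Type*}
    [Fintype S] [Fintype Sφ] [Fintype A] [Nonempty A]
    [DecidableEq S] [DecidableEq Sφ] [DecidableEq A]
    (φ : S → Sφ) (γ : ℝ) (n : ℕ)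
    (D : Fin n → S × A × ℝ × S)
    -- every abstract cell (x,a) receives at least one sample
    (hcell : ∀ (x : Sφ) (a : A), ∃ i, φ (D i).1 = x ∧ (D i).2.1 = a)
    (Rhat : Sφ → A → ℝ) (Phat : Sφ → A → Sφ → ℝ)
    -- R̂_φ(x,a) = (1/|D_{x,a}|) Σ_{(r,s')∈D_{x,a}} r
    (hRhat : ∀ x a, Rhat x a =
      (∑ i, if φ (D i).1 = x ∧ (D i).2.1 = a then (D i).2.2.1 else 0)
        / (∑ i, if φ (D i).1 = x ∧ (D i).2.1 = a then (1 : ℝ) else 0))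
    -- P̂_φ(x'|x,a) = (1/|D_{x,a}|) Σ_{(r,s')∈D_{x,a}} 1[φ(s')=x']
    (hPhat : ∀ x a x', Phat x a x' =
      (∑ i, if φ (D i).1 = x ∧ (D i).2.1 = a ∧ φ (D i).2.2.2 = x'
        then (1 : ℝ) else 0)
        / (∑ i, if φ (D i).1 = x ∧ (D i).2.1 = a then (1 : ℝ) else 0))
    -- g_t: value iteration in the estimated abstract model
    (g : ℕ → Sφ → A → ℝ)
    (hg : ∀ t x a, g (t + 1) x a
      = Rhat x a + γ * ∑ x', Phat x a x' * ⨆ a', g t x' a')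
    -- f_t: FQI iterates over the piece-wise constant class F^φ
    (f : ℕ → S → A → ℝ)
    (hf0 : ∀ s a, f 0 s a = g 0 (φ s) a)
    (hfpc : ∀ t s₁ s₂ a, φ s₁ = φ s₂ → f t s₁ a = f t s₂ a)
    (hfmin : ∀ t, ∀ f' : S → A → ℝ,
      (∀ s₁ s₂ a, φ s₁ = φ s₂ → f' s₁ a = f' s₂ a) →
      (1 / (n : ℝ)) * ∑ i, (f (t + 1) (D i).1 (D i).2.1 - (D i).2.2.1
          - γ * ⨆ a', f t (D i).2.2.2 a') ^ 2
        ≤ (1 / (n : ℝ)) * ∑ i, (f' (D i).1 (D i).2.1 - (D i).2.2.1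
          - γ * ⨆ a', f t (D i).2.2.2 a') ^ 2) :
    ∀ t s a, f t s a = g t (φ s) a := by
  intro t
  induction t with
  | zero => intro s a; exact hf0 s a
  | succ t ih =>
    intro s₀ a₀
    -- abbreviations
    set V : Sφ → ℝ := fun x => ⨆ a', g t x a' with hV
    have hsup : ∀ i : Fin n, (⨆ a', f t (D i).2.2.2 a') = V (φ (D i).2.2.2) := by
      intro i
      exact iSup_congr fun a' => ih _ a'
    set y : Fin n → ℝ := fun i => (D i).2.2.1 + γ * V (φ (D i).2.2.2) with hy
    set N : Sφ → A → ℝ :=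
      fun x a => ∑ i, if φ (D i).1 = x ∧ (D i).2.1 = a then (1 : ℝ) else 0 with hN
    have hNpos : ∀ x a, 0 < N x a := by
      intro x a
      obtain ⟨j, hj1, hj2⟩ := hcell x a
      rw [hN]
      apply Finset.sum_pos' (fun i _ => by positivity)
      refine ⟨j, Finset.mem_univ j, ?_⟩
      rw [if_pos ⟨hj1, hj2⟩]
      norm_num
    set m : Sφ → A → ℝ := fun x a =>
      (∑ i, if φ (D i).1 = x ∧ (D i).2.1 = a then y i else 0) / N x a with hm
    -- Step 1 : g (t+1) = m
    have hgm : ∀ x a, g (t + 1) x a = m x a := by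
      intro x a
      have key1 : (∑ x', Phat x a x' * V x')
          = (∑ i, if φ (D i).1 = x ∧ (D i).2.1 = a then V (φ (D i).2.2.2) else 0)
              / N x a := by
        simp only [hPhat, div_mul_eq_mul_div, ← Finset.sum_div, hN]
        congr 1
        rw [show (∑ x', (∑ i, if φ (D i).1 = x ∧ (D i).2.1 = a ∧ φ (D i).2.2.2 = x'
              then (1:ℝ) else 0) * V x')
            = ∑ x', ∑ i, (if φ (D i).1 = x ∧ (D i).2.1 = a ∧ φ (D i).2.2.2 = x'
              then V x' else 0) from by
          apply Finset.sum_congr rfl; intro x' _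
          rw [Finset.sum_mul]
          simp [ite_mul]]
        rw [Finset.sum_comm]
        apply Finset.sum_congr rfl
        intro i _
        by_cases h : φ (D i).1 = x ∧ (D i).2.1 = a
        · simpa [h] using
            (Finset.sum_ite_eq Finset.univ (φ (D i).2.2.2) (fun x' => V x'))
        · rw [if_neg h]
          apply Finset.sum_eq_zero
          intro x' _
          rw [if_neg]
          tauto
      have hsplit : (∑ i, if φ (D i).1 = x ∧ (D i).2.1 = a then y i else 0)
          = (∑ i, if φ (D i).1 = x ∧ (D i).2.1 = a then (D i).2.2.1 else 0)
            + γ * ∑ i, if φ (D i).1 = x ∧ (D i).2.1 = a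
                then V (φ (D i).2.2.2) else 0 := by
        rw [Finset.mul_sum, ← Finset.sum_add_distrib]
        apply Finset.sum_congr rfl
        intro i _
        by_cases h : φ (D i).1 = x ∧ (D i).2.1 = a <;> simp [h, hy]
      have hne : (∑ i, if φ (D i).1 = x ∧ (D i).2.1 = a then (1:ℝ) else 0) ≠ 0 := by
        have h5 := (hNpos x a).ne'
        rw [hN] at h5
        exact h5
      rw [hg, hRhat, key1]
      simp only [hm, hN]
      rw [hsplit]
      field_simp
    -- Step 2 : f (t+1) agrees with m on every data point
    have hn0 : (0 : ℝ) < (n : ℝ) := by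
      obtain ⟨j, -, -⟩ := hcell (φ s₀) a₀
      exact_mod_cast Fin.pos j
    -- cell sums of (m - y) vanish
    have cross0 : ∀ x a,
        (∑ i, if φ (D i).1 = x ∧ (D i).2.1 = a then (m x a - y i) else 0) = 0 := by
      intro x a
      have h1 : (∑ i, if φ (D i).1 = x ∧ (D i).2.1 = a then (m x a - y i) else 0)
          = m x a * N x a
            - ∑ i, if φ (D i).1 = x ∧ (D i).2.1 = a then y i else 0 := by
        rw [hN, Finset.mul_sum, ← Finset.sum_sub_distrib]
        apply Finset.sum_congr rfl
        intro i _
        by_cases h : φ (D i).1 = x ∧ (D i).2.1 = a <;> simp [h]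
      rw [h1, hm, div_mul_cancel₀ _ (hNpos x a).ne']
      ring
    -- grouping a sum over data points by abstract cells
    have group : ∀ h : Fin n → ℝ,
        (∑ i, h i) = ∑ x : Sφ, ∑ a : A,
          ∑ i, if φ (D i).1 = x ∧ (D i).2.1 = a then h i else 0 := by
      intro h
      have h2 : ∀ x : Sφ, (∑ a : A, ∑ i, if φ (D i).1 = x ∧ (D i).2.1 = a
            then h i else 0)
          = ∑ i, ∑ a : A, if φ (D i).1 = x ∧ (D i).2.1 = a then h i else 0 :=
        fun x => Finset.sum_comm
      simp only [h2]
      rw [Finset.sum_comm]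
      apply Finset.sum_congr rfl
      intro i _
      simp [ite_and, Finset.sum_ite_eq]
    -- the cross term vanishes
    have crossterm : (∑ i, (f (t + 1) (D i).1 (D i).2.1 - m (φ (D i).1) (D i).2.1)
          * (m (φ (D i).1) (D i).2.1 - y i)) = 0 := by
      rw [group]
      apply Finset.sum_eq_zero
      intro x _
      apply Finset.sum_eq_zero
      intro a _
      obtain ⟨j, hj1, hj2⟩ := hcell x a
      have h1 : (∑ i, if φ (D i).1 = x ∧ (D i).2.1 = a
            then (f (t + 1) (D i).1 (D i).2.1 - m (φ (D i).1) (D i).2.1)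
              * (m (φ (D i).1) (D i).2.1 - y i) else 0)
          = (f (t + 1) (D j).1 a - m x a)
            * ∑ i, if φ (D i).1 = x ∧ (D i).2.1 = a then (m x a - y i) else 0 := by
        rw [Finset.mul_sum]
        apply Finset.sum_congr rfl
        intro i _
        by_cases h : φ (D i).1 = x ∧ (D i).2.1 = a
        · rw [if_pos h, if_pos h, h.1, h.2,
            hfpc (t + 1) (D i).1 (D j).1 a (h.1.trans hj1.symm)]
        · simp [h]
      rw [h1, cross0, mul_zero]
    -- the FQI optimality condition
    have hle := hfmin t (fun s a => m (φ s) a) (by intro s₁ s₂ a h; simp [h])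
    simp only [hsup] at hle
    have hle2 : (∑ i, (f (t + 1) (D i).1 (D i).2.1 - (D i).2.2.1
            - γ * V (φ (D i).2.2.2)) ^ 2)
        ≤ ∑ i, (m (φ (D i).1) (D i).2.1 - (D i).2.2.1
            - γ * V (φ (D i).2.2.2)) ^ 2 := by
      have := mul_le_mul_of_nonneg_left hle (le_of_lt hn0)
      calc (∑ i, (f (t + 1) (D i).1 (D i).2.1 - (D i).2.2.1
            - γ * V (φ (D i).2.2.2)) ^ 2)
          = (n : ℝ) * ((1 / (n : ℝ)) * ∑ i, (f (t + 1) (D i).1 (D i).2.1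
              - (D i).2.2.1 - γ * V (φ (D i).2.2.2)) ^ 2) := by
            field_simp
        _ ≤ (n : ℝ) * ((1 / (n : ℝ)) * ∑ i, (m (φ (D i).1) (D i).2.1
              - (D i).2.2.1 - γ * V (φ (D i).2.2.2)) ^ 2) := this
        _ = ∑ i, (m (φ (D i).1) (D i).2.1 - (D i).2.2.1
              - γ * V (φ (D i).2.2.2)) ^ 2 := by field_simp
    -- decompose the loss
    have hdecomp : (∑ i, (f (t + 1) (D i).1 (D i).2.1 - (D i).2.2.1
            - γ * V (φ (D i).2.2.2)) ^ 2)
        = (∑ i, (m (φ (D i).1) (D i).2.1 - (D i).2.2.1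
            - γ * V (φ (D i).2.2.2)) ^ 2)
          + (∑ i, (f (t + 1) (D i).1 (D i).2.1 - m (φ (D i).1) (D i).2.1) ^ 2)
          + 2 * ∑ i, (f (t + 1) (D i).1 (D i).2.1 - m (φ (D i).1) (D i).2.1)
              * (m (φ (D i).1) (D i).2.1 - y i) := by
      rw [Finset.mul_sum, ← Finset.sum_add_distrib, ← Finset.sum_add_distrib]
      apply Finset.sum_congr rfl
      intro i _
      have : y i = (D i).2.2.1 + γ * V (φ (D i).2.2.2) := rfl
      rw [this]
      ring
    have hsq : (∑ i, (f (t + 1) (D i).1 (D i).2.1 - m (φ (D i).1) (D i).2.1) ^ 2)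
        ≤ 0 := by
      rw [hdecomp, crossterm] at hle2
      linarith
    have hzero : ∀ i : Fin n,
        f (t + 1) (D i).1 (D i).2.1 = m (φ (D i).1) (D i).2.1 := by
      intro i
      have h1 : ∀ i : Fin n, (0:ℝ) ≤
          (f (t + 1) (D i).1 (D i).2.1 - m (φ (D i).1) (D i).2.1) ^ 2 :=
        fun i => sq_nonneg _
      have h2 : (∑ i, (f (t + 1) (D i).1 (D i).2.1
          - m (φ (D i).1) (D i).2.1) ^ 2) = 0 :=
        le_antisymm hsq (Finset.sum_nonneg fun i _ => h1 i)
      have h3 := (Finset.sum_eq_zero_iff_of_nonneg fun i _ => h1 i).mp h2 i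
        (Finset.mem_univ i)
      have h4 := pow_eq_zero_iff (n := 2) (by norm_num) |>.mp h3
      linarith [h4]
    -- conclude
    obtain ⟨j, hj1, hj2⟩ := hcell (φ s₀) a₀
    have := hzero j
    rw [hj2] at this
    rw [hfpc (t + 1) s₀ (D j).1 a₀ hj1.symm, this, hj1, hgm]
end

section
/- Let φ be a Q*-irrelevant abstraction of a finite MDP M (φ(s₁)=φ(s₂) implies Q*_M(s₁,a)=Q*_M(s₂,a) for all a). Define the weighted abstract MDP M_φ on S_φ with R_φ(x,a) = Σ_{s∈φ⁻¹(x)} w(s,a) R(s,a) and P_φ(x'|x,a) = Σ_{s∈φ⁻¹(x)} w(s,a) Σ_{s'∈φ⁻¹(x')} P(s'|s,a) for any nonnegative weights w(s,a) summing to 1 over s ∈ φ⁻¹(x) for each (x,a). Then the lifted optimal Q-function of the abstract MDP equals the optimal Q-function of M: [Q*_{M_φ}]_M = Q*_M. -/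
open Finset

private lemma sup_diff_le_aux {A : Type*} [Fintype A] [Nonempty A]
    (f g : A → ℝ) (C : ℝ) (h : ∀ a, |f a - g a| ≤ C) :
    |(⨆ a, f a) - ⨆ a, g a| ≤ C := by
  have hbf : BddAbove (Set.range f) := (Set.finite_range f).bddAbove
  have hbg : BddAbove (Set.range g) := (Set.finite_range g).bddAbove
  rw [abs_sub_le_iff]
  constructor
  · have h1 : (⨆ a, f a) ≤ (⨆ a, g a) + C := by
      apply ciSup_le
      intro a
      have h2 := (abs_le.mp (h a)).2
      have hg := le_ciSup hbg a
      linarith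
    linarith
  · have h1 : (⨆ a, g a) ≤ (⨆ a, f a) + C := by
      apply ciSup_le
      intro a
      have h2 := (abs_le.mp (h a)).1
      have hf := le_ciSup hbf a
      linarith
    linarith

private lemma sum_fiber_aux {S Sφ : Type*} [Fintype S] [Fintype Sφ] [DecidableEq Sφ]
    (φ : S → Sφ) (g : S → ℝ) :
    ∑ s', g s' = ∑ x', ∑ s', if φ s' = x' then g s' else 0 := by
  rw [Finset.sum_comm]
  apply Finset.sum_congr rfl
  intro s _
  simp

/-- Let `φ` be a `Q*`-irrelevant abstraction of a finite
MDP `M`. For any nonnegative weights `w(s,a)` summing to 1 over each cell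
`φ⁻¹(x)`, define the weighted abstract MDP `M_φ` with
`R_φ(x,a) = Σ_{s∈φ⁻¹(x)} w(s,a) R(s,a)` and
`P_φ(x'|x,a) = Σ_{s∈φ⁻¹(x)} w(s,a) Σ_{s'∈φ⁻¹(x')} P(s'|s,a)`. Then the
lifted optimal Q-function of `M_φ` equals `Q*_M`: any solution `Qφ` of the
abstract Bellman optimality equation satisfies `Qφ(φ(s),a) = Q*_M(s,a)`. -/
theorem stmt18 {S Sφ A : Type*}
    [Fintype S] [Fintype Sφ] [Fintype A] [Nonempty A] [DecidableEq Sφ]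
    (φ : S → Sφ) (hφsurj : Function.Surjective φ)
    (P : S → A → S → ℝ) (R : S → A → ℝ) (γ : ℝ)
    (hγ0 : 0 ≤ γ) (hγ1 : γ < 1)
    (hP0 : ∀ s a s', 0 ≤ P s a s') (hP1 : ∀ s a, ∑ s', P s a s' = 1)
    (Qs : S → A → ℝ)
    -- Q*_M is the Bellman optimality fixed point in M
    (hQ : ∀ s a, Qs s a = R s a + γ * ∑ s', P s a s' * ⨆ a', Qs s' a')
    -- φ is Q*-irrelevant
    (hirr : ∀ s₁ s₂ a, φ s₁ = φ s₂ → Qs s₁ a = Qs s₂ a)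
    (w : S → A → ℝ) (hw0 : ∀ s a, 0 ≤ w s a)
    (hw1 : ∀ x a, (∑ s, if φ s = x then w s a else 0) = 1)
    (Rφ : Sφ → A → ℝ) (Pφ : Sφ → A → Sφ → ℝ)
    (hRφ : ∀ x a, Rφ x a = ∑ s, if φ s = x then w s a * R s a else 0)
    (hPφ : ∀ x a x', Pφ x a x'
      = ∑ s, if φ s = x
          then w s a * ∑ s', (if φ s' = x' then P s a s' else 0) else 0)
    (Qφ : Sφ → A → ℝ)
    -- Qφ is the Bellman optimality fixed point in the abstract MDP M_φ
    (hQφ : ∀ x a, Qφ x a = Rφ x a + γ * ∑ x', Pφ x a x' * ⨆ a', Qφ x' a') :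
    ∀ s a, Qφ (φ s) a = Qs s a := by
  intro s₀ a₀
  haveI : Nonempty S := ⟨s₀⟩
  haveI : Nonempty Sφ := ⟨φ s₀⟩
  -- representative of each cell
  have hrep : ∀ x, φ (Function.surjInv hφsurj x) = x :=
    fun x => Function.surjInv_eq hφsurj x
  set Qb : Sφ → A → ℝ := fun x a => Qs (Function.surjInv hφsurj x) a with hQbdef
  have hQbs : ∀ s a, Qb (φ s) a = Qs s a := by
    intro s a
    exact hirr _ _ _ (hrep (φ s))
  have hVb : ∀ s, (⨆ a', Qb (φ s) a') = ⨆ a', Qs s a' := by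
    intro s
    exact congrArg iSup (funext fun a => hQbs s a)
  -- Pφ is a probability kernel
  have hPφ0 : ∀ x a x', 0 ≤ Pφ x a x' := by
    intro x a x'
    rw [hPφ]
    apply Finset.sum_nonneg
    intro s _
    by_cases h : φ s = x
    · simp only [h, if_true]
      apply mul_nonneg (hw0 s a)
      apply Finset.sum_nonneg
      intro s' _
      by_cases h' : φ s' = x'
      · simp [h', hP0]
      · simp [h']
    · simp [h]
  have hPφ1 : ∀ x a, ∑ x', Pφ x a x' = 1 := by
    intro x a
    have h1 : ∑ x', Pφ x a x'
        = ∑ s, if φ s = x then w s a * ∑ s', P s a s' else 0 := by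
      simp only [hPφ]
      rw [Finset.sum_comm]
      apply Finset.sum_congr rfl
      intro s _
      by_cases h : φ s = x
      · simp only [h, if_true, ← Finset.mul_sum]
        congr 1
        rw [← sum_fiber_aux φ (fun s' => P s a s')]
      · simp [h]
    rw [h1]
    have h2 : ∀ s, (if φ s = x then w s a * ∑ s', P s a s' else 0)
        = (if φ s = x then w s a else 0) := by
      intro s
      by_cases h : φ s = x <;> simp [h, hP1]
    simp only [h2]
    exact hw1 x a
  -- fiber decomposition of expectations of piecewise-constant functions
  have hkey : ∀ s a, ∑ x', (∑ s', if φ s' = x' then P s a s' else 0) * (⨆ a', Qb x' a')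
      = ∑ s', P s a s' * ⨆ a', Qs s' a' := by
    intro s a
    have h1 : ∀ x', (∑ s', if φ s' = x' then P s a s' else 0) * (⨆ a', Qb x' a')
        = ∑ s', if φ s' = x' then P s a s' * ⨆ a', Qs s' a' else 0 := by
      intro x'
      rw [Finset.sum_mul]
      apply Finset.sum_congr rfl
      intro s' _
      by_cases h : φ s' = x'
      · simp only [h, if_true]
        rw [← h, hVb]
      · simp [h]
    simp only [h1]
    rw [← sum_fiber_aux φ (fun s' => P s a s' * ⨆ a', Qs s' a')]
  -- Step A: Qb is also a fixed point of the abstract Bellman operator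
  have hQbFix : ∀ x a, Qb x a = Rφ x a + γ * ∑ x', Pφ x a x' * ⨆ a', Qb x' a' := by
    intro x a
    have h1 : Qb x a = ∑ s, if φ s = x then w s a * Qs s a else 0 := by
      calc Qb x a = (∑ s, if φ s = x then w s a else 0) * Qb x a := by
            rw [hw1]; ring
        _ = ∑ s, (if φ s = x then w s a else 0) * Qb x a := by
            rw [Finset.sum_mul]
        _ = ∑ s, if φ s = x then w s a * Qs s a else 0 := by
            apply Finset.sum_congr rfl
            intro s _
            by_cases h : φ s = x
            · simp only [h, if_true]
              rw [← h, hQbs]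
            · simp [h]
    have hexp : ∑ x', Pφ x a x' * ⨆ a', Qb x' a'
        = ∑ s, if φ s = x then w s a * ∑ s', P s a s' * ⨆ a', Qs s' a' else 0 := by
      simp only [hPφ]
      calc ∑ x', (∑ s, if φ s = x
              then w s a * ∑ s', (if φ s' = x' then P s a s' else 0) else 0)
              * (⨆ a', Qb x' a')
          = ∑ s, ∑ x', (if φ s = x
              then w s a * ∑ s', (if φ s' = x' then P s a s' else 0) else 0)
              * (⨆ a', Qb x' a') := by
            rw [Finset.sum_comm]
            apply Finset.sum_congr rfl
            intro x' _
            rw [Finset.sum_mul]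
        _ = ∑ s, if φ s = x then w s a * ∑ s', P s a s' * ⨆ a', Qs s' a' else 0 := by
            apply Finset.sum_congr rfl
            intro s _
            by_cases h : φ s = x
            · simp only [h, if_true]
              rw [← hkey s a, Finset.mul_sum]
              apply Finset.sum_congr rfl
              intro x' _
              ring
            · simp [h]
    rw [h1, hRφ, hexp, Finset.mul_sum, ← Finset.sum_add_distrib]
    apply Finset.sum_congr rfl
    intro s _
    by_cases h : φ s = x
    · simp only [h, if_true]
      rw [hQ s a]
      ring
    · simp [h]
  -- Step B: uniqueness of the fixed point via contraction
  set D : Sφ → A → ℝ := fun x a => |Qφ x a - Qb x a| with hDdef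
  have hbdd : BddAbove (Set.range fun p : Sφ × A => D p.1 p.2) :=
    (Set.finite_range _).bddAbove
  set C : ℝ := ⨆ p : Sφ × A, D p.1 p.2 with hCdef
  have hC : ∀ x a, D x a ≤ C := fun x a => le_ciSup hbdd (x, a)
  have hC0 : 0 ≤ C := le_trans (abs_nonneg _) (hC (φ s₀) a₀)
  have hcon : ∀ x a, D x a ≤ γ * C := by
    intro x a
    have hdiff : Qφ x a - Qb x a
        = γ * ∑ x', Pφ x a x' * ((⨆ a', Qφ x' a') - ⨆ a', Qb x' a') := by
      have h3 : ∑ x', Pφ x a x' * ((⨆ a', Qφ x' a') - ⨆ a', Qb x' a')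
          = (∑ x', Pφ x a x' * ⨆ a', Qφ x' a')
            - ∑ x', Pφ x a x' * ⨆ a', Qb x' a' := by
        rw [← Finset.sum_sub_distrib]
        apply Finset.sum_congr rfl
        intros
        ring
      rw [h3, hQφ x a, hQbFix x a]
      ring
    have hbound : ∀ x', |(⨆ a', Qφ x' a') - ⨆ a', Qb x' a'| ≤ C :=
      fun x' => sup_diff_le_aux _ _ C (fun a' => hC x' a')
    calc D x a = γ * |∑ x', Pφ x a x' * ((⨆ a', Qφ x' a') - ⨆ a', Qb x' a')| := by
          rw [hDdef]
          simp only
          rw [hdiff, abs_mul, abs_of_nonneg hγ0]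
      _ ≤ γ * ∑ x', Pφ x a x' * C := by
          apply mul_le_mul_of_nonneg_left _ hγ0
          calc |∑ x', Pφ x a x' * ((⨆ a', Qφ x' a') - ⨆ a', Qb x' a')|
              ≤ ∑ x', |Pφ x a x' * ((⨆ a', Qφ x' a') - ⨆ a', Qb x' a')| :=
                Finset.abs_sum_le_sum_abs _ _
            _ ≤ ∑ x', Pφ x a x' * C := by
                apply Finset.sum_le_sum
                intro x' _
                rw [abs_mul, abs_of_nonneg (hPφ0 x a x')]
                exact mul_le_mul_of_nonneg_left (hbound x') (hPφ0 x a x')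
      _ = γ * C := by rw [← Finset.sum_mul, hPφ1, one_mul]
  have hCγ : C ≤ γ * C := by
    rw [hCdef]
    exact ciSup_le (fun p => hcon p.1 p.2)
  have hCle : C ≤ 0 := by nlinarith
  have hD0 : D (φ s₀) a₀ = 0 :=
    le_antisymm (le_trans (hC (φ s₀) a₀) hCle) (abs_nonneg _)
  have := abs_eq_zero.mp hD0
  have hfin : Qφ (φ s₀) a₀ = Qb (φ s₀) a₀ := by linarith [sub_eq_zero.mp this]
  rw [hfin, hQbs]
end
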